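/- arXiv:1703.07259 — 10 statements merged into one kernel-verified Lean document; each statement's English description precedes it below -/
import Mathlib

section
/- If $f, g : \mathbf{N} \to H$ are measurable functions from the space of $\sigma$-finite counting measures on $E$ to a separable Hilbert space $H$ such that $f(N) = g(N)$ $\mathbb{P}$-almost surely, where $N$ is a Poisson random measure with $\sigma$-finite intensity $\mu$, then $f(N + \delta_x) = g(N + \delta_x)$ holds $\mathbb{P}\otimes\mu$-almost everywhere in $(\omega, x) \in \Omega \times E$. In particular the operator $F \mapsto (\varepsilon_x^+ F)_{x\in E}$ is well-defined from $L^0(\Omega;H)$ to $L^0(\Omega\times E;H)$. -/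
open MeasureTheory Filter
open scoped ENNReal RealInnerProductSpace

/-- **Mecke's formula** (add-one form), characterizing Poisson random measures
with σ-finite intensity `μ`. -/
def MeckeAdd {Ω E : Type*} [MeasurableSpace Ω] [MeasurableSpace E]
    (P : Measure Ω) (μ : Measure E) (N : Ω → Measure E) : Prop :=
  ∀ f : Measure E → E → ℝ≥0∞, Measurable (Function.uncurry f) →
    ∫⁻ ω, ∫⁻ x, f (N ω) x ∂(N ω) ∂P
      = ∫⁻ ω, ∫⁻ x, f (N ω + Measure.dirac x) x ∂μ ∂P

/-!
Mecke's formula applied to `(ν, x) ↦ 1_D(ν)`, with `D` the measurable set where `f ≠ g`, shows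
that the `P ⊗ μ`-measure of `{(ω, x) | N ω + δ_x ∈ D}` equals `𝔼[N(E) · 1_D(N)]`. The latter
vanishes because `N ∉ D` almost surely.
-/

namespace MeckeAdd

variable {Ω E : Type*} [MeasurableSpace Ω] [MeasurableSpace E]
  {P : Measure Ω} {μ : Measure E} {N : Ω → Measure E}

theorem prod_setOf_add_dirac_mem [SFinite μ] (hMecke : MeckeAdd P μ N) (hN : Measurable N)
    {D : Set (Measure E)} (hD : MeasurableSet D) :
    P.prod μ {q | N q.1 + Measure.dirac q.2 ∈ D}
      = ∫⁻ ω, D.indicator (fun ν => ν Set.univ) (N ω) ∂P := by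
  have hadd : Measurable fun q : Ω × E => N q.1 + Measure.dirac q.2 :=
    (hN.comp measurable_fst).add (Measure.measurable_dirac.comp measurable_snd)
  have hmecke := hMecke (fun ν _ => D.indicator 1 ν)
    ((measurable_one.indicator hD).comp measurable_fst)
  have hS : MeasurableSet {q : Ω × E | N q.1 + Measure.dirac q.2 ∈ D} := hadd hD
  rw [Measure.prod_apply hS]
  convert hmecke.symm using 1
  · exact lintegral_congr fun ω =>
      (lintegral_indicator_one (hadd.comp measurable_prodMk_left hD)).symm
  · refine lintegral_congr fun ω => ?_
    by_cases hω : N ω ∈ D <;> simp [hω]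

theorem ae_prod_add_dirac_notMem [SFinite μ] (hMecke : MeckeAdd P μ N) (hN : Measurable N)
    {D : Set (Measure E)} (hD : MeasurableSet D) (hND : ∀ᵐ ω ∂P, N ω ∉ D) :
    ∀ᵐ q ∂P.prod μ, N q.1 + Measure.dirac q.2 ∉ D := by
  simp only [ae_iff, not_not]
  rw [hMecke.prod_setOf_add_dirac_mem hN hD, lintegral_congr_ae (g := 0)]
  · exact lintegral_zero
  · filter_upwards [hND] with ω hω
    exact Set.indicator_of_notMem hω _

end MeckeAdd

theorem epsPlus_well_defined_general
    {Ω E H : Type*} [MeasurableSpace Ω] [MeasurableSpace E]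
    [NormedAddCommGroup H]
    (P : Measure Ω) (μ : Measure E) [SigmaFinite μ]
    (N : Ω → Measure E) (hMecke : MeckeAdd P μ N) (hN : Measurable N)
    (f g : Measure E → H) (hf : StronglyMeasurable f) (hg : StronglyMeasurable g)
    (hfg : ∀ᵐ ω ∂P, f (N ω) = g (N ω)) :
    ∀ᵐ p ∂(P.prod μ), f (N p.1 + Measure.dirac p.2) = g (N p.1 + Measure.dirac p.2) :=
  (hMecke.ae_prod_add_dirac_notMem hN (hf.measurableSet_eq_fun hg).compl
    (by simpa using hfg)).mono fun _ h => by simpa using h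

/-- **Well-definedness of `ε⁺`** : if `f, g : 𝐍 → H` are measurable with
`f (N) = g (N)` `P`-a.s., where `N` is a Poisson random measure with σ-finite
intensity `μ`, then `f (N + δ_x) = g (N + δ_x)` for `P ⊗ μ`-a.e. `(ω, x)`.
In particular `F ↦ (ε⁺_x F)` is well-defined from `L⁰(Ω;H)` to `L⁰(Ω × E;H)`. -/
theorem epsPlus_well_defined
    {Ω E H : Type*} [MeasurableSpace Ω] [MeasurableSpace E]
    [NormedAddCommGroup H] [InnerProductSpace ℝ H] [CompleteSpace H]
    [TopologicalSpace.SeparableSpace H]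
    (P : Measure Ω) [IsProbabilityMeasure P] (μ : Measure E) [SigmaFinite μ]
    (N : Ω → Measure E) (hMecke : MeckeAdd P μ N) (hN : Measurable N)
    (f g : Measure E → H) (hf : StronglyMeasurable f) (hg : StronglyMeasurable g)
    (hfg : ∀ᵐ ω ∂P, f (N ω) = g (N ω)) :
    ∀ᵐ p ∂(P.prod μ), f (N p.1 + Measure.dirac p.2) = g (N p.1 + Measure.dirac p.2) :=
  epsPlus_well_defined_general P μ N hMecke hN f g hf hg hfg
end

section
/- Let $p > 1$, $q \in [1, p)$, $F \in L^p(\Omega; H)$, and $B \in \mathcal{E}$ with $\mu(B) < \infty$. Then $\mathbf{1}_{\Omega\times B}\, DF \in L^q(\Omega \times E; H)$ and there is a finite constant $C_B$ depending only on $B$, $\mu$, $p$, $q$ (but not on $F$) such that $\|\mathbf{1}_{\Omega\times B} DF\|_{L^q(\Omega\times E;H)} \le C_B \|F\|_{L^p(\Omega;H)}$. -/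
/-! Mecke's formula turns the `L^q`-norm of `(ω, x) ↦ F(N ω + δ_x)` over `Ω × B` into
`E[‖F‖^q N(B)]`, which Hölder's inequality with the exponents `p/q` and `p/(p-q)` bounds by
`‖F‖_p^q` times a moment of `N(B)`. All moments of `N(B)` are finite, since Mecke's formula also
gives `E[N(B)^(n+1)] = μ(B) E[(N(B)+1)^n]`. The term `F` itself contributes
`μ(B)^(1/q) ‖F‖_q ≤ μ(B)^(1/q) ‖F‖_p`. -/

open MeasureTheory Filter
open scoped ENNReal RealInnerProductSpace

theorem ENNReal.add_one_pow_le (x : ℝ≥0∞) (n : ℕ) : (x + 1) ^ n ≤ 2 ^ n * (x ^ n + 1) := by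
  have hmax : max x 1 ^ n ≤ x ^ n + 1 := by
    rcases le_total x 1 with h | h
    · simp [max_eq_right h]
    · simp [max_eq_left h]
  calc (x + 1) ^ n ≤ (2 * max x 1) ^ n := by
        gcongr
        rw [two_mul]
        exact add_le_add (le_max_left _ _) (le_max_right _ _)
    _ ≤ 2 ^ n * (x ^ n + 1) := by
        rw [mul_pow]
        gcongr

theorem ENNReal.rpow_le_pow_add_one (x : ℝ≥0∞) {r : ℝ} (hr : 0 ≤ r) {n : ℕ} (hn : r ≤ n) :
    x ^ r ≤ x ^ n + 1 := by
  rcases le_total x 1 with h | h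
  · exact (ENNReal.rpow_le_one h hr).trans le_add_self
  · calc x ^ r ≤ x ^ (n : ℝ) := ENNReal.rpow_le_rpow_of_exponent_le h hn
      _ ≤ x ^ n + 1 := by rw [ENNReal.rpow_natCast]; exact le_self_add

section Moments

variable {α : Type*} [MeasurableSpace α] {μ : Measure α} {X : α → ℝ≥0∞}

theorem lintegral_add_one_pow_lt_top [IsFiniteMeasure μ] {n : ℕ}
    (h : ∫⁻ a, X a ^ n ∂μ < ∞) : ∫⁻ a, (X a + 1) ^ n ∂μ < ∞ := by
  calc ∫⁻ a, (X a + 1) ^ n ∂μ ≤ ∫⁻ a, 2 ^ n * (X a ^ n + 1) ∂μ :=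
        lintegral_mono fun a => ENNReal.add_one_pow_le (X a) n
    _ = 2 ^ n * (∫⁻ a, X a ^ n ∂μ + μ Set.univ) := by
        rw [lintegral_const_mul' _ _ (by simp), lintegral_add_right' _ aemeasurable_const,
          lintegral_one]
    _ < ∞ := ENNReal.mul_lt_top (by simp) (ENNReal.add_lt_top.2 ⟨h, measure_lt_top μ _⟩)

theorem lintegral_rpow_lt_top_of_forall_pow [IsFiniteMeasure μ]
    (h : ∀ n : ℕ, ∫⁻ a, X a ^ n ∂μ < ∞) {r : ℝ} (hr : 0 ≤ r) : ∫⁻ a, X a ^ r ∂μ < ∞ :=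
  calc ∫⁻ a, X a ^ r ∂μ ≤ ∫⁻ a, (X a ^ ⌈r⌉₊ + 1) ∂μ :=
        lintegral_mono fun a => ENNReal.rpow_le_pow_add_one _ hr (Nat.le_ceil r)
    _ = ∫⁻ a, X a ^ ⌈r⌉₊ ∂μ + μ Set.univ := by
        rw [lintegral_add_right _ measurable_const, lintegral_one]
    _ < ∞ := ENNReal.add_lt_top.2 ⟨h _, measure_lt_top μ _⟩

end Moments

theorem ENNReal.lintegral_rpow_mul_le {α : Type*} [MeasurableSpace α] (μ : Measure α)
    {p q : ℝ} (hq : 0 < q) (hqp : q < p) {f g : α → ℝ≥0∞} (hf : AEMeasurable f μ)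
    (hg : AEMeasurable g μ) :
    ∫⁻ a, f a ^ q * g a ∂μ
      ≤ (∫⁻ a, f a ^ p ∂μ) ^ (q / p) * (∫⁻ a, g a ^ (p / (p - q)) ∂μ) ^ ((p - q) / p) := by
  have hp : 0 < p := hq.trans hqp
  have hconj : (p / q).HolderConjugate (p / (p - q)) := by
    rw [Real.holderConjugate_iff]
    refine ⟨(one_lt_div hq).2 hqp, ?_⟩
    field_simp [(sub_pos.2 hqp).ne']
    ring
  have hpow : ∀ a, (f a ^ q) ^ (p / q) = f a ^ p := fun a => by
    rw [← ENNReal.rpow_mul, mul_div_cancel₀ _ hq.ne']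
  simpa only [Pi.mul_apply, hpow, one_div_div] using
    ENNReal.lintegral_mul_le_Lp_mul_Lq μ hconj (hf.pow_const q) hg

theorem eLpNorm_comp_fst_prod {α β ε : Type*} [MeasurableSpace α] [MeasurableSpace β]
    [TopologicalSpace ε] [ContinuousENorm ε] {μ : Measure α} {ν : Measure β} [SFinite ν]
    {p : ℝ≥0∞} (hp : p ≠ ∞) {F : α → ε} (hF : AEStronglyMeasurable F μ) :
    eLpNorm (fun z : α × β => F z.1) p (μ.prod ν)
      = ν Set.univ ^ (1 / p).toReal * eLpNorm F p μ := by
  rw [← smul_eq_mul, ← eLpNorm_smul_measure_of_ne_top hp, ← Measure.map_fst_prod]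
  exact (eLpNorm_map_measure (by rw [Measure.map_fst_prod]; exact hF.smul_measure _)
    measurable_fst.aemeasurable).symm

namespace MeckeAdd

variable {Ω E : Type*} [MeasurableSpace Ω] [MeasurableSpace E] {P : Measure Ω} {μ : Measure E}
  {N : Ω → Measure E} {B : Set E}

theorem lintegral_mul_apply (hMecke : MeckeAdd P μ N) (hB : MeasurableSet B)
    {g : Measure E → ℝ≥0∞} (hg : Measurable g) :
    ∫⁻ ω, g (N ω) * N ω B ∂P = ∫⁻ ω, ∫⁻ x in B, g (N ω + Measure.dirac x) ∂μ ∂P := by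
  have hmeas : Measurable (Function.uncurry fun ν x => B.indicator (fun _ => g ν) x) := by
    have : (Function.uncurry fun ν x => B.indicator (fun _ => g ν) x)
        = (Set.univ ×ˢ B).indicator fun z : Measure E × E => g z.1 := by
      ext ⟨ν, x⟩
      by_cases hx : x ∈ B <;> simp [hx]
    rw [this]
    exact (hg.comp measurable_fst).indicator (MeasurableSet.univ.prod hB)
  calc ∫⁻ ω, g (N ω) * N ω B ∂P = ∫⁻ ω, ∫⁻ x, B.indicator (fun _ => g (N ω)) x ∂(N ω) ∂P := by
        simp_rw [lintegral_indicator hB, setLIntegral_const]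
    _ = ∫⁻ ω, ∫⁻ x, B.indicator (fun _ => g (N ω + Measure.dirac x)) x ∂μ ∂P := hMecke _ hmeas
    _ = ∫⁻ ω, ∫⁻ x in B, g (N ω + Measure.dirac x) ∂μ ∂P := by
        simp_rw [← lintegral_indicator hB, Set.indicator]

theorem lintegral_pow_succ (hMecke : MeckeAdd P μ N) (hN : Measurable N)
    (hB : MeasurableSet B) (n : ℕ) :
    ∫⁻ ω, N ω B ^ (n + 1) ∂P = (∫⁻ ω, (N ω B + 1) ^ n ∂P) * μ B := by
  have hNB : Measurable fun ω => N ω B := (Measure.measurable_coe hB).comp hN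
  have hdirac : ∀ ω,
      Set.EqOn (fun x => (N ω + Measure.dirac x) B ^ n) (fun _ => (N ω B + 1) ^ n) B :=
    fun ω x hx => by simp [Measure.dirac_apply_of_mem hx]
  calc ∫⁻ ω, N ω B ^ (n + 1) ∂P = ∫⁻ ω, N ω B ^ n * N ω B ∂P := by simp_rw [pow_succ]
    _ = ∫⁻ ω, ∫⁻ x in B, (N ω + Measure.dirac x) B ^ n ∂μ ∂P :=
        hMecke.lintegral_mul_apply hB ((Measure.measurable_coe hB).pow_const n)
    _ = ∫⁻ ω, (N ω B + 1) ^ n * μ B ∂P := by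
        simp_rw [setLIntegral_congr_fun hB (hdirac _), setLIntegral_const]
    _ = (∫⁻ ω, (N ω B + 1) ^ n ∂P) * μ B := lintegral_mul_const _ ((hNB.add_const 1).pow_const n)

theorem lintegral_pow_lt_top [IsFiniteMeasure P] (hMecke : MeckeAdd P μ N) (hN : Measurable N)
    (hB : MeasurableSet B) (hBfin : μ B < ∞) (n : ℕ) : ∫⁻ ω, N ω B ^ n ∂P < ∞ := by
  induction n with
  | zero => simp
  | succ n ih =>
    rw [hMecke.lintegral_pow_succ hN hB]
    exact ENNReal.mul_lt_top (lintegral_add_one_pow_lt_top ih) hBfin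

variable {H : Type*} [NormedAddCommGroup H] [SFinite μ]

theorem eLpNorm_comp_add_dirac_le (hMecke : MeckeAdd P μ N) (hN : Measurable N)
    (hB : MeasurableSet B) {f : Measure E → H} (hf : StronglyMeasurable f) {p q : ℝ≥0∞}
    (hq : q ≠ 0) (hqp : q < p) (hp : p ≠ ∞) :
    eLpNorm (fun z : Ω × E => f (N z.1 + Measure.dirac z.2)) q (P.prod (μ.restrict B))
      ≤ (∫⁻ ω, N ω B ^ (p.toReal / (p.toReal - q.toReal)) ∂P)
          ^ ((p.toReal - q.toReal) / (p.toReal * q.toReal)) * eLpNorm (fun ω => f (N ω)) p P := by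
  have hq_top : q ≠ ∞ := (hqp.trans_le le_top).ne
  set a := q.toReal
  set b := p.toReal
  have ha : 0 < a := ENNReal.toReal_pos hq hq_top
  have hab : a < b := ENNReal.toReal_strict_mono hp hqp
  have hb : 0 < b := ha.trans hab
  have hg : Measurable fun ν => ‖f ν‖ₑ := hf.enorm
  have hadd : Measurable fun z : Ω × E => N z.1 + Measure.dirac z.2 := by fun_prop
  have hmecke : ∫⁻ z, ‖f (N z.1 + Measure.dirac z.2)‖ₑ ^ a ∂(P.prod (μ.restrict B))
      = ∫⁻ ω, ‖f (N ω)‖ₑ ^ a * N ω B ∂P := by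
    rw [lintegral_prod (fun z : Ω × E => ‖f (N z.1 + Measure.dirac z.2)‖ₑ ^ a)
        ((hg.pow_const a).comp hadd).aemeasurable,
      hMecke.lintegral_mul_apply hB (hg.pow_const a)]
  have hholder := ENNReal.lintegral_rpow_mul_le P ha hab (hg.comp hN).aemeasurable
    ((Measure.measurable_coe hB).comp hN).aemeasurable
  rw [eLpNorm_eq_lintegral_rpow_enorm_toReal hq hq_top,
    eLpNorm_eq_lintegral_rpow_enorm_toReal (hq.bot_lt.trans hqp).ne' hp, hmecke]
  calc (∫⁻ ω, ‖f (N ω)‖ₑ ^ a * N ω B ∂P) ^ (1 / a)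
      ≤ ((∫⁻ ω, ‖f (N ω)‖ₑ ^ b ∂P) ^ (a / b)
          * (∫⁻ ω, N ω B ^ (b / (b - a)) ∂P) ^ ((b - a) / b)) ^ (1 / a) :=
        ENNReal.rpow_le_rpow hholder (by positivity)
    _ = _ := by
        rw [ENNReal.mul_rpow_of_nonneg _ _ (by positivity), ← ENNReal.rpow_mul,
          ← ENNReal.rpow_mul, mul_comm]
        congr 2
        · field_simp
        · rw [mul_one_div, div_div_cancel_left' ha.ne', one_div]

theorem eLpNorm_indicator_sub_le [IsProbabilityMeasure P] (hMecke : MeckeAdd P μ N)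
    (hN : Measurable N) (hB : MeasurableSet B) {F : Ω → H} {f : Measure E → H}
    (hf : StronglyMeasurable f) (hFf : F =ᵐ[P] fun ω => f (N ω)) {p q : ℝ≥0∞} (hq : 1 ≤ q)
    (hqp : q < p) (hp : p ≠ ∞) :
    eLpNorm ((Set.univ ×ˢ B).indicator
        fun z : Ω × E => f (N z.1 + Measure.dirac z.2) - F z.1) q (P.prod μ)
      ≤ ((∫⁻ ω, N ω B ^ (p.toReal / (p.toReal - q.toReal)) ∂P)
          ^ ((p.toReal - q.toReal) / (p.toReal * q.toReal)) + μ B ^ (1 / q).toReal)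
        * eLpNorm F p P := by
  have hF_meas : AEStronglyMeasurable F P :=
    (hf.comp_measurable hN).aestronglyMeasurable.congr hFf.symm
  rw [eLpNorm_indicator_eq_eLpNorm_restrict (MeasurableSet.univ.prod hB), ← Measure.prod_restrict,
    Measure.restrict_univ, add_mul]
  calc _ ≤ eLpNorm (fun z : Ω × E => f (N z.1 + Measure.dirac z.2)) q (P.prod (μ.restrict B))
        + eLpNorm (fun z : Ω × E => F z.1) q (P.prod (μ.restrict B)) :=
        eLpNorm_sub_le (hf.comp_measurable (by fun_prop)).aestronglyMeasurable hF_meas.comp_fst hq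
    _ ≤ _ := by
        gcongr
        · rw [eLpNorm_congr_ae hFf]
          exact hMecke.eLpNorm_comp_add_dirac_le hN hB hf (by positivity) hqp hp
        · rw [eLpNorm_comp_fst_prod (hqp.trans_le le_top).ne hF_meas, Measure.restrict_apply_univ]
          gcongr
          exact eLpNorm_le_eLpNorm_of_exponent_le hqp.le hF_meas

end MeckeAdd

theorem local_Lq_estimate_D_general
    {Ω E H : Type*} [MeasurableSpace Ω] [MeasurableSpace E]
    [NormedAddCommGroup H]
    (P : Measure Ω) [IsProbabilityMeasure P] (μ : Measure E) [SigmaFinite μ]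
    (N : Ω → Measure E) (hMecke : MeckeAdd P μ N) (hN : Measurable N)
    (B : Set E) (hB : MeasurableSet B) (hBfin : μ B < ∞)
    (p q : ℝ≥0∞) (hp' : p ≠ ∞) (hq : 1 ≤ q) (hqp : q < p) :
    ∃ C : ℝ≥0∞, C < ∞ ∧
      ∀ (F : Ω → H) (f : Measure E → H), StronglyMeasurable f →
        (∀ᵐ ω ∂P, F ω = f (N ω)) → MemLp F p P →
        MemLp ((Set.univ ×ˢ B).indicator
            fun pr : Ω × E => f (N pr.1 + Measure.dirac pr.2) - F pr.1) q (P.prod μ) ∧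
        eLpNorm ((Set.univ ×ˢ B).indicator
            fun pr : Ω × E => f (N pr.1 + Measure.dirac pr.2) - F pr.1) q (P.prod μ)
          ≤ C * eLpNorm F p P := by
  have hqp_real : q.toReal ≤ p.toReal := ENNReal.toReal_mono hp' hqp.le
  have hmoment : ∫⁻ ω, N ω B ^ (p.toReal / (p.toReal - q.toReal)) ∂P < ∞ :=
    lintegral_rpow_lt_top_of_forall_pow (hMecke.lintegral_pow_lt_top hN hB hBfin)
      (div_nonneg ENNReal.toReal_nonneg (sub_nonneg.2 hqp_real))
  set M := (∫⁻ ω, N ω B ^ (p.toReal / (p.toReal - q.toReal)) ∂P)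
    ^ ((p.toReal - q.toReal) / (p.toReal * q.toReal))
  have hC : M + μ B ^ (1 / q).toReal < ∞ :=
    ENNReal.add_lt_top.2 ⟨ENNReal.rpow_lt_top_of_nonneg (by positivity) hmoment.ne,
      ENNReal.rpow_lt_top_of_nonneg ENNReal.toReal_nonneg hBfin.ne⟩
  refine ⟨_, hC, fun F f hf hFf hF => ?_⟩
  have hbound := hMecke.eLpNorm_indicator_sub_le hN hB hf hFf hq hqp hp'
  have hF_meas : AEStronglyMeasurable F P :=
    (hf.comp_measurable hN).aestronglyMeasurable.congr (EventuallyEq.symm hFf)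
  have hshift_meas : StronglyMeasurable fun z : Ω × E => f (N z.1 + Measure.dirac z.2) :=
    hf.comp_measurable (by fun_prop)
  exact ⟨⟨(hshift_meas.aestronglyMeasurable.sub hF_meas.comp_fst).indicator
      (MeasurableSet.univ.prod hB), hbound.trans_lt (ENNReal.mul_lt_top hC hF.eLpNorm_lt_top)⟩,
    hbound⟩

/-- **Local `L^q`-estimate for the difference operator.**  Let `p > 1`,
`q ∈ [1, p)` and let `B ∈ ℰ` have finite `μ`-measure.  There is a finite constant
`C = C_{B,μ,p,q}`, not depending on `F`, such that for every `F ∈ L^p(Ω;H)`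
(with representative `f`) one has `𝟙_{Ω × B} DF ∈ L^q(Ω × E; H)` and
`‖𝟙_{Ω × B} DF‖_{L^q} ≤ C ‖F‖_{L^p}`, where `D_x F = f (N + δ_x) - F`. -/
theorem local_Lq_estimate_D
    {Ω E H : Type*} [MeasurableSpace Ω] [MeasurableSpace E]
    [NormedAddCommGroup H] [InnerProductSpace ℝ H] [CompleteSpace H]
    [TopologicalSpace.SeparableSpace H]
    (P : Measure Ω) [IsProbabilityMeasure P] (μ : Measure E) [SigmaFinite μ]
    (N : Ω → Measure E) (hMecke : MeckeAdd P μ N) (hN : Measurable N)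
    (B : Set E) (hB : MeasurableSet B) (hBfin : μ B < ∞)
    (p q : ℝ≥0∞) (hp : 1 < p) (hp' : p ≠ ∞) (hq : 1 ≤ q) (hqp : q < p) :
    ∃ C : ℝ≥0∞, C < ∞ ∧
      ∀ (F : Ω → H) (f : Measure E → H), StronglyMeasurable f →
        (∀ᵐ ω ∂P, F ω = f (N ω)) → MemLp F p P →
        MemLp ((Set.univ ×ˢ B).indicator
            fun pr : Ω × E => f (N pr.1 + Measure.dirac pr.2) - F pr.1) q (P.prod μ) ∧
        eLpNorm ((Set.univ ×ˢ B).indicator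
            fun pr : Ω × E => f (N pr.1 + Measure.dirac pr.2) - F pr.1) q (P.prod μ)
          ≤ C * eLpNorm F p P :=
  local_Lq_estimate_D_general P μ N hMecke hN B hB hBfin p q hp' hq hqp
end

section
/- For $p > q \ge 1$, the restriction of the Poisson difference operator $D: L^0(\Omega;H) \to L^0(\Omega\times E;H)$ to $L^p(\Omega;H)$ is a continuous mapping from $L^p(\Omega;H)$ to $L^0(E; L^q(\Omega;H))$ (the space of measurable functions from $E$ to $L^q(\Omega;H)$ with the topology of local convergence in measure). -/
open MeasureTheory Filter
open scoped ENNReal RealInnerProductSpace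

/-! By the Mecke formula, `∫_B E‖h(N + δₓ)‖^q μ(dx) = E[‖h(N)‖^q N(B)]`, and the Mecke formula
also shows that `N(B)` has moments of all orders when `μ(B) < ∞`. Hölder's inequality with
exponents `p/q` and its conjugate bounds the right-hand side by `C ‖h(N)‖_p^q`, and Jensen's
inequality on `B` turns this into the linear estimate `∫_B ‖D_x F‖_{L^q} μ(dx) ≤ C_B ‖F‖_{L^p}`.
Since `min 1 u ≤ u`, convergence in `L^p` of `F_n - G` forces the integrals in question to `0`. -/

lemma lintegral_rpow_lt_top_of_forall_pow_lt_top {α : Type*} [MeasurableSpace α]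
    {P : Measure α} [IsFiniteMeasure P] {X : α → ℝ≥0∞}
    (hX : ∀ k : ℕ, ∫⁻ ω, X ω ^ k ∂P < ∞) {s : ℝ} (hs : 0 ≤ s) :
    ∫⁻ ω, X ω ^ s ∂P < ∞ := by
  have hle : ∀ ω, X ω ^ s ≤ 1 + X ω ^ ⌈s⌉₊ := fun ω => by
    rcases le_total (X ω) 1 with h | h
    · exact (ENNReal.rpow_le_one h hs).trans le_self_add
    · rw [← ENNReal.rpow_natCast]
      exact (ENNReal.rpow_le_rpow_of_exponent_le h (Nat.le_ceil s)).trans le_add_self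
  calc ∫⁻ ω, X ω ^ s ∂P ≤ ∫⁻ ω, 1 + X ω ^ ⌈s⌉₊ ∂P := lintegral_mono hle
    _ = P Set.univ + ∫⁻ ω, X ω ^ ⌈s⌉₊ ∂P := by
      rw [lintegral_add_left measurable_const, lintegral_one]
    _ < ∞ := ENNReal.add_lt_top.2 ⟨measure_lt_top P _, hX _⟩

lemma lintegral_enorm_rpow_mul_le {α H : Type*} [MeasurableSpace α] [NormedAddCommGroup H]
    {P : Measure α} {u : α → H} {X : α → ℝ≥0∞} (hu : AEStronglyMeasurable u P)
    (hX : AEMeasurable X P) {p q : ℝ≥0∞} {s : ℝ} (hs : (p.toReal / q.toReal).HolderConjugate s) :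
    ∫⁻ ω, ‖u ω‖ₑ ^ q.toReal * X ω ∂P ≤ eLpNorm u p P ^ q.toReal * (∫⁻ ω, X ω ^ s ∂P) ^ (1 / s) := by
  have hr : 1 < p.toReal / q.toReal := hs.lt
  have hq : 0 < q.toReal := ENNReal.toReal_nonneg.lt_of_ne fun h => by
    rw [← h, div_zero] at hr; exact hr.not_gt one_pos
  have hp : 0 < p.toReal := hq.trans ((one_lt_div hq).1 hr)
  refine (ENNReal.lintegral_mul_le_Lp_mul_Lq P hs (hu.enorm.pow_const _) hX).trans_eq ?_
  simp_rw [← ENNReal.rpow_mul, mul_div_cancel₀ _ hq.ne']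
  rw [eLpNorm_eq_lintegral_rpow_enorm_toReal (ENNReal.toReal_pos_iff.1 hp).1.ne'
    (ENNReal.toReal_pos_iff.1 hp).2.ne, ← ENNReal.rpow_mul]
  congr 2
  field_simp

lemma lintegral_le_lintegral_rpow_mul_measure_univ {α : Type*} [MeasurableSpace α]
    {ν : Measure α} {T : α → ℝ≥0∞} (hT : AEMeasurable T ν) {q : ℝ} (hq : 1 ≤ q) :
    ∫⁻ x, T x ∂ν ≤ (∫⁻ x, T x ^ q ∂ν) ^ (1 / q) * ν Set.univ ^ (1 - 1 / q) := by
  simpa [eLpNorm', enorm_eq_self] using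
    eLpNorm'_le_eLpNorm'_mul_rpow_measure_univ one_pos hq hT.aestronglyMeasurable

namespace MeckeAdd

variable {Ω E : Type*} [MeasurableSpace Ω] [MeasurableSpace E]
  {P : Measure Ω} {μ : Measure E} {N : Ω → Measure E} {B : Set E}

lemma lintegral_mul_apply_eq (hMecke : MeckeAdd P μ N) {φ : Measure E → ℝ≥0∞}
    (hφ : Measurable φ) (hB : MeasurableSet B) :
    ∫⁻ ω, φ (N ω) * N ω B ∂P = ∫⁻ ω, ∫⁻ x in B, φ (N ω + Measure.dirac x) ∂μ ∂P := by
  have hB1 : Measurable (B.indicator (1 : E → ℝ≥0∞)) := measurable_one.indicator hB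
  convert hMecke (fun ν x => φ ν * B.indicator 1 x)
    ((hφ.comp measurable_fst).mul (hB1.comp measurable_snd)) using 3 with ω ω
  · rw [lintegral_const_mul _ hB1, lintegral_indicator_one hB]
  · rw [← lintegral_indicator hB]
    congr 1 with x
    by_cases hx : x ∈ B <;> simp [hx]

lemma lintegral_pow_apply_lt_top [IsFiniteMeasure P] (hMecke : MeckeAdd P μ N)
    (hB : MeasurableSet B) (hμB : μ B < ∞) (k : ℕ) : ∫⁻ ω, N ω B ^ k ∂P < ∞ := by
  induction k with
  | zero => simp
  | succ k ih =>
    have hMB : Measurable fun ν : Measure E => ν B ^ k := (Measure.measurable_coe hB).pow_const k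
    have hstep : ∫⁻ ω, N ω B ^ (k + 1) ∂P = (∫⁻ ω, (N ω B + 1) ^ k ∂P) * μ B := by
      simp_rw [pow_succ, hMecke.lintegral_mul_apply_eq hMB hB]
      rw [← lintegral_mul_const' _ _ hμB.ne]
      refine lintegral_congr fun ω => ?_
      rw [← setLIntegral_const]
      exact setLIntegral_congr_fun hB fun x hx => by simp [Measure.dirac_apply_of_mem hx]
    have hbin : ∀ ω, (N ω B + 1) ^ k ≤ 2 ^ k * (N ω B ^ k + 1) := fun ω =>
      calc (N ω B + 1) ^ k ≤ (2 * max (N ω B) 1) ^ k := by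
            gcongr; rw [two_mul]; exact add_le_add (le_max_left _ _) (le_max_right _ _)
        _ = 2 ^ k * max (N ω B ^ k) 1 := by rw [mul_pow, (pow_left_mono k).map_max, one_pow]
        _ ≤ 2 ^ k * (N ω B ^ k + 1) := by gcongr; exact max_le le_self_add le_add_self
    rw [hstep]
    refine ENNReal.mul_lt_top ((lintegral_mono hbin).trans_lt ?_) hμB
    rw [lintegral_const_mul' _ _ (by simp), lintegral_add_right _ measurable_const, lintegral_one]
    exact ENNReal.mul_lt_top (by simp) (ENNReal.add_lt_top.2 ⟨ih, measure_lt_top P _⟩)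

lemma setLIntegral_lintegral_add_dirac_eq [SFinite P] [SFinite μ] (hMecke : MeckeAdd P μ N)
    (hN : Measurable N) {φ : Measure E → ℝ≥0∞} (hφ : Measurable φ) (hB : MeasurableSet B) :
    ∫⁻ x in B, ∫⁻ ω, φ (N ω + Measure.dirac x) ∂P ∂μ = ∫⁻ ω, φ (N ω) * N ω B ∂P := by
  rw [hMecke.lintegral_mul_apply_eq hφ hB]
  have hNx : Measurable fun z : E × Ω => N z.2 + Measure.dirac z.1 :=
    (hN.comp measurable_snd).add (Measure.measurable_dirac.comp measurable_fst)
  exact lintegral_lintegral_swap (hφ.comp hNx).aemeasurable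

lemma exists_setLIntegral_eLpNorm_add_dirac_le [IsFiniteMeasure P] [SFinite μ]
    (hMecke : MeckeAdd P μ N) (hN : Measurable N) {p q : ℝ≥0∞} (hq : 1 ≤ q) (hqp : q < p)
    (hp : p ≠ ∞) (hB : MeasurableSet B) (hμB : μ B < ∞) {H : Type*} [NormedAddCommGroup H] :
    ∃ C ≠ ∞, ∀ h : Measure E → H, StronglyMeasurable h →
      ∫⁻ x in B, eLpNorm (fun ω => h (N ω + Measure.dirac x)) q P ∂μ
        ≤ C * eLpNorm (fun ω => h (N ω)) p P := by
  have hq0 : q ≠ 0 := (one_pos.trans_le hq).ne'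
  have hqtop : q ≠ ∞ := (hqp.trans_le le_top).ne
  set qr := q.toReal
  have hqr : 1 ≤ qr := by simpa using ENNReal.toReal_mono hqtop hq
  have hr : 1 < p.toReal / qr :=
    (one_lt_div (by positivity)).2 (ENNReal.toReal_strict_mono hp hqp)
  set s := (p.toReal / qr).conjExponent
  have hs : (p.toReal / qr).HolderConjugate s := .conjExponent hr
  set M := (∫⁻ ω, N ω B ^ s ∂P) ^ (1 / s)
  have hM : M ≠ ∞ := ENNReal.rpow_ne_top_of_nonneg (by simp [hs.symm.nonneg])
    (lintegral_rpow_lt_top_of_forall_pow_lt_top (hMecke.lintegral_pow_apply_lt_top hB hμB)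
      hs.symm.nonneg).ne
  have hexp : 0 ≤ 1 - 1 / qr := sub_nonneg.2 ((div_le_one (by positivity)).2 hqr)
  refine ⟨M ^ (1 / qr) * μ B ^ (1 - 1 / qr), ENNReal.mul_ne_top
    (ENNReal.rpow_ne_top_of_nonneg (by positivity) hM)
    (ENNReal.rpow_ne_top_of_nonneg hexp hμB.ne), fun h hh => ?_⟩
  have hNx : Measurable fun z : Ω × E => N z.1 + Measure.dirac z.2 :=
    (hN.comp measurable_fst).add (Measure.measurable_dirac.comp measurable_snd)
  have hφ : Measurable fun ν => ‖h ν‖ₑ ^ qr := hh.enorm.pow_const qr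
  have hT : ∀ x, eLpNorm (fun ω => h (N ω + Measure.dirac x)) q P ^ qr
      = ∫⁻ ω, ‖h (N ω + Measure.dirac x)‖ₑ ^ qr ∂P := fun x => by
    rw [eLpNorm_eq_eLpNorm' hq0 hqtop, lintegral_rpow_enorm_eq_rpow_eLpNorm' (by positivity)]
  have hTm : Measurable fun x => eLpNorm (fun ω => h (N ω + Measure.dirac x)) q P := by
    simp_rw [eLpNorm_eq_lintegral_rpow_enorm_toReal hq0 hqtop]
    exact (hφ.comp hNx).lintegral_prod_left'.pow_const _
  calc ∫⁻ x in B, eLpNorm (fun ω => h (N ω + Measure.dirac x)) q P ∂μ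
      ≤ (∫⁻ x in B, ∫⁻ ω, ‖h (N ω + Measure.dirac x)‖ₑ ^ qr ∂P ∂μ) ^ (1 / qr)
          * μ B ^ (1 - 1 / qr) := by
        simpa only [hT, Measure.restrict_apply_univ] using
          lintegral_le_lintegral_rpow_mul_measure_univ (ν := μ.restrict B) hTm.aemeasurable hqr
    _ = (∫⁻ ω, ‖h (N ω)‖ₑ ^ qr * N ω B ∂P) ^ (1 / qr) * μ B ^ (1 - 1 / qr) := by
        rw [hMecke.setLIntegral_lintegral_add_dirac_eq hN hφ hB]
    _ ≤ (eLpNorm (fun ω => h (N ω)) p P ^ qr * M) ^ (1 / qr) * μ B ^ (1 - 1 / qr) := by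
        gcongr
        exact lintegral_enorm_rpow_mul_le (hh.comp_measurable hN).aestronglyMeasurable
          ((Measure.measurable_coe hB).comp hN).aemeasurable hs
    _ = M ^ (1 / qr) * μ B ^ (1 - 1 / qr) * eLpNorm (fun ω => h (N ω)) p P := by
        rw [ENNReal.mul_rpow_of_nonneg _ _ (by positivity), ← ENNReal.rpow_mul,
          mul_one_div_cancel (by positivity), ENNReal.rpow_one]
        ring

lemma exists_setLIntegral_eLpNorm_sub_le [IsProbabilityMeasure P] [SFinite μ]
    (hMecke : MeckeAdd P μ N) (hN : Measurable N) {p q : ℝ≥0∞} (hq : 1 ≤ q) (hqp : q < p)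
    (hp : p ≠ ∞) (hB : MeasurableSet B) (hμB : μ B < ∞) {H : Type*} [NormedAddCommGroup H] :
    ∃ C ≠ ∞, ∀ h : Measure E → H, StronglyMeasurable h →
      ∫⁻ x in B, eLpNorm (fun ω => h (N ω + Measure.dirac x) - h (N ω)) q P ∂μ
        ≤ C * eLpNorm (fun ω => h (N ω)) p P := by
  obtain ⟨C, hC, hest⟩ := hMecke.exists_setLIntegral_eLpNorm_add_dirac_le hN hq hqp hp hB hμB
    (H := H)
  refine ⟨C + μ B, ENNReal.add_ne_top.2 ⟨hC, hμB.ne⟩, fun h hh => ?_⟩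
  have hhN : AEStronglyMeasurable (fun ω => h (N ω)) P :=
    (hh.comp_measurable hN).aestronglyMeasurable
  have hhNx : ∀ x, AEStronglyMeasurable (fun ω => h (N ω + Measure.dirac x)) P := fun x =>
    (hh.comp_measurable (hN.add_const _)).aestronglyMeasurable
  calc ∫⁻ x in B, eLpNorm (fun ω => h (N ω + Measure.dirac x) - h (N ω)) q P ∂μ
      ≤ ∫⁻ x in B, eLpNorm (fun ω => h (N ω + Measure.dirac x)) q P
          + eLpNorm (fun ω => h (N ω)) p P ∂μ := by
        refine lintegral_mono fun x => (eLpNorm_sub_le (hhNx x) hhN hq).trans ?_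
        gcongr
        exact eLpNorm_le_eLpNorm_of_exponent_le hqp.le hhN
    _ = ∫⁻ x in B, eLpNorm (fun ω => h (N ω + Measure.dirac x)) q P ∂μ
          + eLpNorm (fun ω => h (N ω)) p P * μ B := by
        rw [lintegral_add_right _ measurable_const, setLIntegral_const]
    _ ≤ (C + μ B) * eLpNorm (fun ω => h (N ω)) p P := by
        rw [add_mul, mul_comm (μ B)]
        gcongr
        exact hest h hh

end MeckeAdd

theorem D_continuous_Lp_to_L0_Lq_general
    {Ω E H : Type*} [MeasurableSpace Ω] [MeasurableSpace E]
    [NormedAddCommGroup H]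
    (P : Measure Ω) [IsProbabilityMeasure P] (μ : Measure E) [SigmaFinite μ]
    (N : Ω → Measure E) (hMecke : MeckeAdd P μ N) (hN : Measurable N)
    (p q : ℝ≥0∞) (hp' : p ≠ ∞) (hq : 1 ≤ q) (hqp : q < p)
    (F : ℕ → Ω → H) (f : ℕ → Measure E → H) (G : Ω → H) (g : Measure E → H)
    (hf : ∀ n, StronglyMeasurable (f n)) (hg : StronglyMeasurable g)
    (hFf : ∀ n, ∀ᵐ ω ∂P, F n ω = f n (N ω)) (hGg : ∀ᵐ ω ∂P, G ω = g (N ω))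
    (hconv : Tendsto (fun n => eLpNorm (fun ω => F n ω - G ω) p P) atTop (nhds 0)) :
    ∀ B : Set E, MeasurableSet B → μ B < ∞ →
      Tendsto (fun n => ∫⁻ x in B,
          min 1 (eLpNorm (fun ω =>
            (f n (N ω + Measure.dirac x) - F n ω) - (g (N ω + Measure.dirac x) - G ω)) q P) ∂μ)
        atTop (nhds 0) := by
  intro B hB hμB
  obtain ⟨C, hC, hD⟩ := hMecke.exists_setLIntegral_eLpNorm_sub_le hN hq hqp hp' hB hμB (H := H)
  have hbound : ∀ n, ∫⁻ x in B, min 1 (eLpNorm (fun ω =>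
      (f n (N ω + Measure.dirac x) - F n ω) - (g (N ω + Measure.dirac x) - G ω)) q P) ∂μ
        ≤ C * eLpNorm (fun ω => F n ω - G ω) p P := fun n => by
    calc _ ≤ ∫⁻ x in B, eLpNorm (fun ω =>
            (f n - g) (N ω + Measure.dirac x) - (f n - g) (N ω)) q P ∂μ := by
          refine lintegral_mono fun x => (min_le_right _ _).trans_eq (eLpNorm_congr_ae ?_)
          filter_upwards [hFf n, hGg] with ω hF hG
          simp only [Pi.sub_apply, hF, hG]
          abel
      _ ≤ C * eLpNorm (fun ω => (f n - g) (N ω)) p P := hD _ ((hf n).sub hg)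
      _ = C * eLpNorm (fun ω => F n ω - G ω) p P := by
          refine congrArg _ (eLpNorm_congr_ae ?_)
          filter_upwards [hFf n, hGg] with ω hF hG
          simp only [Pi.sub_apply, hF, hG]
  have hlim : Tendsto (fun n => C * eLpNorm (fun ω => F n ω - G ω) p P) atTop (nhds 0) := by
    simpa using ENNReal.Tendsto.const_mul hconv (Or.inr hC)
  exact tendsto_of_tendsto_of_tendsto_of_le_of_le tendsto_const_nhds hlim (fun _ => zero_le) hbound

/-- **Continuity of `D` from `L^p(Ω;H)` to `L⁰(E; L^q(Ω;H))`** for `p > q ≥ 1`: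
if `F_n → F` in `L^p(Ω;H)` then `DF_n → DF` in `L⁰(E; L^q(Ω;H))`, i.e. for every
`B` with `μ B < ∞` one has
`∫_B (1 ∧ ‖D_x F_n - D_x F‖_{L^q(Ω;H)}) μ(dx) → 0`, which is exactly
convergence in the topology of local convergence in measure of `L⁰(E; L^q(Ω;H))`. -/
theorem D_continuous_Lp_to_L0_Lq
    {Ω E H : Type*} [MeasurableSpace Ω] [MeasurableSpace E]
    [NormedAddCommGroup H] [InnerProductSpace ℝ H] [CompleteSpace H]
    [TopologicalSpace.SeparableSpace H]
    (P : Measure Ω) [IsProbabilityMeasure P] (μ : Measure E) [SigmaFinite μ]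
    (N : Ω → Measure E) (hMecke : MeckeAdd P μ N) (hN : Measurable N)
    (p q : ℝ≥0∞) (hp' : p ≠ ∞) (hq : 1 ≤ q) (hqp : q < p)
    (F : ℕ → Ω → H) (f : ℕ → Measure E → H) (G : Ω → H) (g : Measure E → H)
    (hf : ∀ n, StronglyMeasurable (f n)) (hg : StronglyMeasurable g)
    (hFf : ∀ n, ∀ᵐ ω ∂P, F n ω = f n (N ω)) (hGg : ∀ᵐ ω ∂P, G ω = g (N ω))
    (hFm : ∀ n, MemLp (F n) p P) (hGm : MemLp G p P)
    (hconv : Tendsto (fun n => eLpNorm (fun ω => F n ω - G ω) p P) atTop (nhds 0)) :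
    ∀ B : Set E, MeasurableSet B → μ B < ∞ →
      Tendsto (fun n => ∫⁻ x in B,
          min 1 (eLpNorm (fun ω =>
            (f n (N ω + Measure.dirac x) - F n ω) - (g (N ω + Measure.dirac x) - G ω)) q P) ∂μ)
        atTop (nhds 0) :=
  D_continuous_Lp_to_L0_Lq_general P μ N hMecke hN p q hp' hq hqp F f G g hf hg hFf hGg hconv
end

section
/- For every $p > 1$, the Sobolev-type space $\mathbb{D}^{1,p}(H) = \{F \in L^p(\Omega;H) : DF \in L^p(\Omega\times E;H)\}$, equipped with the norm $\|F\|_{\mathbb{D}^{1,p}(H)} = (\|F\|_{L^p(\Omega;H)}^p + \|DF\|_{L^p(\Omega\times E;H)}^p)^{1/p}$, is a Banach space; equivalently, the restriction of $D$ to $\mathbb{D}^{1,p}(H)$ is a closed operator from $L^p(\Omega;H)$ to $L^p(\Omega\times E;H)$. Moreover $\mathbb{D}^{1,2}(H)$ is a Hilbert space. -/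
/-!
Closedness of `D` is proved along an almost surely convergent subsequence: if `F_k → G₀` in
`L^p(Ω)` and `DF_k → K` in `L^p(Ω × E)`, pass to a subsequence along which both converge almost
everywhere. Then `f_k(N + δ_x) = DF_k(ω, x) + F_k(ω)` converges for almost every `(ω, x)`, so the
pointwise limit `g` of the representatives `f_k` satisfies `g(N) = G₀` and `g(N + δ_x) - g(N) = K`
almost everywhere.
-/

open MeasureTheory Filter
open scoped ENNReal

section LpLimits

variable {α β H H' : Type*} [MeasurableSpace α] [MeasurableSpace β]
  [NormedAddCommGroup H] [NormedAddCommGroup H'] {ν : Measure α} {ν' : Measure β} {p : ℝ≥0∞}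

lemma exists_memLp_tendsto_eLpNorm_of_cauchy [CompleteSpace H] [Fact (1 ≤ p)] {u : ℕ → α → H}
    (hu : ∀ n, MemLp (u n) p ν)
    (hcau : ∀ ε : ℝ≥0∞, 0 < ε → ∃ n₀, ∀ m ≥ n₀, ∀ n ≥ n₀,
        eLpNorm (fun a => u m a - u n a) p ν < ε) :
    ∃ v : α → H, MemLp v p ν ∧
      Tendsto (fun n => eLpNorm (fun a => u n a - v a) p ν) atTop (nhds 0) := by
  have hU : CauchySeq fun n => (hu n).toLp (u n) := by
    refine EMetric.cauchySeq_iff'.2 fun ε hε => ?_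
    obtain ⟨n₀, h⟩ := hcau ε hε
    exact ⟨n₀, fun n hn => (Lp.edist_toLp_toLp _ _ _ _).trans_lt (h n hn n₀ le_rfl)⟩
  obtain ⟨V, hV⟩ := cauchySeq_tendsto_of_complete hU
  rw [← Lp.toLp_coeFn V (Lp.memLp V), Lp.tendsto_Lp_iff_tendsto_eLpNorm''] at hV
  exact ⟨V, Lp.memLp V, hV⟩

lemma tendsto_eLpNorm_sub_congr_ae {u : ℕ → α → H} {v w : α → H} (hvw : v =ᵐ[ν] w)
    (h : Tendsto (fun n => eLpNorm (fun a => u n a - v a) p ν) atTop (nhds 0)) :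
    Tendsto (fun n => eLpNorm (fun a => u n a - w a) p ν) atTop (nhds 0) := by
  refine h.congr fun n => eLpNorm_congr_ae ?_
  filter_upwards [hvw] with a ha
  rw [ha]

lemma exists_common_subseq_tendsto_ae_of_tendsto_eLpNorm (hp : p ≠ 0)
    {u : ℕ → α → H} {v : α → H} {u' : ℕ → β → H'} {v' : β → H'}
    (hu : ∀ n, AEStronglyMeasurable (u n) ν) (hv : AEStronglyMeasurable v ν)
    (hu' : ∀ n, AEStronglyMeasurable (u' n) ν') (hv' : AEStronglyMeasurable v' ν')
    (h : Tendsto (fun n => eLpNorm (fun a => u n a - v a) p ν) atTop (nhds 0))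
    (h' : Tendsto (fun n => eLpNorm (fun b => u' n b - v' b) p ν') atTop (nhds 0)) :
    ∃ φ : ℕ → ℕ, (∀ᵐ a ∂ν, Tendsto (fun k => u (φ k) a) atTop (nhds (v a))) ∧
      ∀ᵐ b ∂ν', Tendsto (fun k => u' (φ k) b) atTop (nhds (v' b)) := by
  obtain ⟨φ, hφ, hφu⟩ := (tendstoInMeasure_of_tendsto_eLpNorm hp hu hv h).exists_seq_tendsto_ae
  obtain ⟨φ', hφ', hφ'u'⟩ := (tendstoInMeasure_of_tendsto_eLpNorm hp (fun k => hu' (φ k)) hv'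
    (h'.comp hφ.tendsto_atTop)).exists_seq_tendsto_ae
  exact ⟨φ ∘ φ', hφu.mono fun a ha => ha.comp hφ'.tendsto_atTop, hφ'u'⟩

end LpLimits

theorem D1p_complete_general
    {Ω E H : Type*} [MeasurableSpace Ω] [MeasurableSpace E]
    [NormedAddCommGroup H] [CompleteSpace H]
    (P : Measure Ω) (μ : Measure E) [SigmaFinite μ]
    (N : Ω → Measure E)
    (p : ℝ≥0∞) (hp : 1 < p)
    (F : ℕ → Ω → H) (f : ℕ → Measure E → H)
    (hf : ∀ n, StronglyMeasurable (f n))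
    (hFf : ∀ n, ∀ᵐ ω ∂P, F n ω = f n (N ω))
    (hFm : ∀ n, MemLp (F n) p P)
    (hDm : ∀ n, MemLp (fun pr : Ω × E =>
        f n (N pr.1 + Measure.dirac pr.2) - F n pr.1) p (P.prod μ))
    (hFcauchy : ∀ ε : ℝ≥0∞, 0 < ε → ∃ n₀, ∀ m ≥ n₀, ∀ n ≥ n₀,
        eLpNorm (fun ω => F m ω - F n ω) p P < ε)
    (hDcauchy : ∀ ε : ℝ≥0∞, 0 < ε → ∃ n₀, ∀ m ≥ n₀, ∀ n ≥ n₀,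
        eLpNorm (fun pr : Ω × E =>
            (f m (N pr.1 + Measure.dirac pr.2) - F m pr.1)
              - (f n (N pr.1 + Measure.dirac pr.2) - F n pr.1)) p (P.prod μ) < ε) :
    ∃ (G : Ω → H) (g : Measure E → H), StronglyMeasurable g ∧
      (∀ᵐ ω ∂P, G ω = g (N ω)) ∧ MemLp G p P ∧
      MemLp (fun pr : Ω × E => g (N pr.1 + Measure.dirac pr.2) - G pr.1) p (P.prod μ) ∧
      Tendsto (fun n => eLpNorm (fun ω => F n ω - G ω) p P) atTop (nhds 0) ∧
      Tendsto (fun n => eLpNorm (fun pr : Ω × E =>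
          (f n (N pr.1 + Measure.dirac pr.2) - F n pr.1)
            - (g (N pr.1 + Measure.dirac pr.2) - G pr.1)) p (P.prod μ)) atTop (nhds 0) := by
  have := Fact.mk hp.le
  obtain ⟨G₀, hG₀, hFG₀⟩ := exists_memLp_tendsto_eLpNorm_of_cauchy hFm hFcauchy
  obtain ⟨K, hK, hDK⟩ := exists_memLp_tendsto_eLpNorm_of_cauchy hDm hDcauchy
  obtain ⟨ψ, hFψ, hDψ⟩ := exists_common_subseq_tendsto_ae_of_tendsto_eLpNorm
    (zero_lt_one.trans hp).ne' (fun n => (hFm n).1) hG₀.1 (fun n => (hDm n).1) hK.1 hFG₀ hDK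
  set g : Measure E → H := fun ν => limUnder atTop fun k => f (ψ k) ν
  have hg : StronglyMeasurable g := StronglyMeasurable.limUnder fun k => hf (ψ k)
  have hg_eq {ν c} (h : Tendsto (fun k => f (ψ k) ν) atTop (nhds c)) : g ν = c := h.limUnder_eq
  have hgG₀ : (fun ω => g (N ω)) =ᵐ[P] G₀ := by
    filter_upwards [hFψ, ae_all_iff.2 hFf] with ω hF hFf
    exact hg_eq (hF.congr fun k => hFf (ψ k))
  have hgK : (fun pr : Ω × E => g (N pr.1 + Measure.dirac pr.2) - g (N pr.1)) =ᵐ[P.prod μ] K := by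
    filter_upwards [hDψ, Measure.quasiMeasurePreserving_fst.ae hFψ,
      Measure.quasiMeasurePreserving_fst.ae hgG₀] with pr hD hF hG
    rw [hg_eq ((hD.add hF).congr fun k => sub_add_cancel _ _), hG, add_sub_cancel_right]
  exact ⟨fun ω => g (N ω), g, hg, ae_of_all _ fun _ => rfl, (memLp_congr_ae hgG₀).2 hG₀,
    (memLp_congr_ae hgK).2 hK, tendsto_eLpNorm_sub_congr_ae hgG₀.symm hFG₀,
    tendsto_eLpNorm_sub_congr_ae hgK.symm hDK⟩

/-- **Completeness of the Sobolev space `𝔻^{1,p}(H)`** (equivalently, closedness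
of the restricted difference operator `D` from `L^p(Ω;H)` to `L^p(Ω × E;H)`):
every sequence `(F_n)` in `𝔻^{1,p}(H)` which is Cauchy both in `L^p(Ω;H)` and
such that `(DF_n)` is Cauchy in `L^p(Ω × E;H)` converges in the
`𝔻^{1,p}(H)`-norm to some `G ∈ 𝔻^{1,p}(H)`; here `D_x F = f (N + δ_x) - F` for a
representative `f` of `F`.  (For `p = 2` the norm comes from an inner product,
so `𝔻^{1,2}(H)` is a Hilbert space.) -/
theorem D1p_complete
    {Ω E H : Type*} [MeasurableSpace Ω] [MeasurableSpace E]
    [NormedAddCommGroup H] [InnerProductSpace ℝ H] [CompleteSpace H]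
    [TopologicalSpace.SeparableSpace H]
    (P : Measure Ω) [IsProbabilityMeasure P] (μ : Measure E) [SigmaFinite μ]
    (N : Ω → Measure E) (hMecke : MeckeAdd P μ N) (hN : Measurable N)
    (p : ℝ≥0∞) (hp : 1 < p) (hp' : p ≠ ∞)
    (F : ℕ → Ω → H) (f : ℕ → Measure E → H)
    (hf : ∀ n, StronglyMeasurable (f n))
    (hFf : ∀ n, ∀ᵐ ω ∂P, F n ω = f n (N ω))
    (hFm : ∀ n, MemLp (F n) p P)
    (hDm : ∀ n, MemLp (fun pr : Ω × E =>
        f n (N pr.1 + Measure.dirac pr.2) - F n pr.1) p (P.prod μ))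
    (hFcauchy : ∀ ε : ℝ≥0∞, 0 < ε → ∃ n₀, ∀ m ≥ n₀, ∀ n ≥ n₀,
        eLpNorm (fun ω => F m ω - F n ω) p P < ε)
    (hDcauchy : ∀ ε : ℝ≥0∞, 0 < ε → ∃ n₀, ∀ m ≥ n₀, ∀ n ≥ n₀,
        eLpNorm (fun pr : Ω × E =>
            (f m (N pr.1 + Measure.dirac pr.2) - F m pr.1)
              - (f n (N pr.1 + Measure.dirac pr.2) - F n pr.1)) p (P.prod μ) < ε) :
    ∃ (G : Ω → H) (g : Measure E → H), StronglyMeasurable g ∧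
      (∀ᵐ ω ∂P, G ω = g (N ω)) ∧ MemLp G p P ∧
      MemLp (fun pr : Ω × E => g (N pr.1 + Measure.dirac pr.2) - G pr.1) p (P.prod μ) ∧
      Tendsto (fun n => eLpNorm (fun ω => F n ω - G ω) p P) atTop (nhds 0) ∧
      Tendsto (fun n => eLpNorm (fun pr : Ω × E =>
          (f n (N pr.1 + Measure.dirac pr.2) - F n pr.1)
            - (g (N pr.1 + Measure.dirac pr.2) - G pr.1)) p (P.prod μ)) atTop (nhds 0) :=
  D1p_complete_general P μ N p hp F f hf hFf hFm hDm hFcauchy hDcauchy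
end

section
/- Let $p>1$, $F \in \mathbb{D}^{1,p}(H)$, and $(e_k)_{k\in\mathbb{N}}$ an orthonormal basis of $H$. Define $F_n := \sum_{k} ((-n/k) \vee \langle F, e_k\rangle \wedge (n/k))\, e_k$. Then each $F_n$ belongs to $\mathbb{D}^{1,p}(H) \cap L^\infty(\Omega;H)$ and $F_n \to F$ in $\mathbb{D}^{1,p}(H)$. Consequently $\mathbb{D}^{1,p}(H)\cap L^\infty(\Omega;H)$ is dense in $\mathbb{D}^{1,p}(H)$. -/
open MeasureTheory Filter
open scoped ENNReal RealInnerProductSpace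

/-- Coordinatewise truncation w.r.t. an orthonormal basis `e`:
`trunc e n v = ∑_k ((-n/k) ∨ ⟪v, e_k⟫ ∧ (n/k)) e_k` (with `k` running through
`1, 2, …` encoded as `k+1` for `k : ℕ`). -/
noncomputable def trunc {H : Type*} [NormedAddCommGroup H] [InnerProductSpace ℝ H]
    (e : ℕ → H) (n : ℕ) (v : H) : H :=
  ∑' k : ℕ, (max (-((n : ℝ) / (k + 1))) (min ⟪v, e k⟫ ((n : ℝ) / (k + 1)))) • e k

open Topology
open scoped lp

section Clamp

def clamp (c a : ℝ) : ℝ := max (-c) (min a c)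

variable {c a : ℝ}

lemma clamp_eq_self (h : |a| ≤ c) : clamp c a = a := by
  rw [abs_le] at h
  rw [clamp, min_eq_left h.2, max_eq_right h.1]

lemma abs_clamp_le (hc : 0 ≤ c) : |clamp c a| ≤ c :=
  abs_le.2 ⟨le_max_left _ _, max_le (by linarith) (min_le_right _ _)⟩

lemma abs_clamp_sub_clamp_le (c a b : ℝ) : |clamp c a - clamp c b| ≤ |a - b| := by
  simp only [clamp, max_comm (-c)]
  exact (abs_max_sub_max_le_abs _ _ _).trans
    ((abs_min_sub_min_le_max a c b c).trans (by simp))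

lemma clamp_zero (hc : 0 ≤ c) : clamp c 0 = 0 := by
  rw [clamp, min_eq_left hc, max_eq_right (neg_nonpos.2 hc)]

lemma abs_clamp_le_abs (hc : 0 ≤ c) : |clamp c a| ≤ |a| := by
  simpa [clamp_zero hc] using abs_clamp_sub_clamp_le c a 0

lemma abs_clamp_sub_self_le (hc : 0 ≤ c) : |clamp c a - a| ≤ |a| := by
  rw [clamp]
  grind

end Clamp

namespace lp

variable {ι : Type*} {p : ℝ≥0∞}

lemma tendsto_of_tendsto_apply_of_dominated {α : Type*} {l : Filter α} {E : ι → Type*}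
    [∀ i, NormedAddCommGroup (E i)] [Fact (1 ≤ p)] (hp : p ≠ ∞)
    {x : α → lp E p} {y : lp E p} (g : ℓ^p(ι, ℝ))
    (hlim : ∀ i, Tendsto (fun n => x n i) l (𝓝 (y i)))
    (hbound : ∀ n i, ‖x n i - y i‖ ≤ g i) : Tendsto x l (𝓝 y) := by
  have hq : 0 < p.toReal := ENNReal.toReal_pos (zero_lt_one.trans_le Fact.out).ne' hp
  rw [tendsto_iff_norm_sub_tendsto_zero]
  have hpow : Tendsto (fun n => ‖x n - y‖ ^ p.toReal) l (𝓝 0) := by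
    simp_rw [norm_rpow_eq_tsum hq, coeFn_sub, Pi.sub_apply]
    have hdom : ∀ n i, ‖‖x n i - y i‖ ^ p.toReal‖ ≤ ‖g i‖ ^ p.toReal := fun n i => by
      rw [Real.norm_of_nonneg (by positivity)]
      exact Real.rpow_le_rpow (norm_nonneg _) ((hbound n i).trans (le_abs_self _)) hq.le
    simpa [Real.zero_rpow hq.ne'] using tendsto_tsum_of_dominated_convergence
      ((lp.memℓp g).summable hq)
      (fun i => ((hlim i).sub_const (y i)).norm.rpow_const (Or.inr hq.le))
      (Eventually.of_forall hdom)
  simpa [Real.zero_rpow (one_div_pos.2 hq).ne', ← Real.rpow_mul (norm_nonneg _), hq.ne']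
    using hpow.rpow_const (p := 1 / p.toReal) (Or.inr (by positivity))

variable {c : ι → ℝ}

def coordClamp (hc : 0 ≤ c) (x : ℓ^p(ι, ℝ)) : ℓ^p(ι, ℝ) :=
  ⟨fun i => clamp (c i) (x i), (lp.memℓp x).mono' fun i => abs_clamp_le_abs (hc i)⟩

@[simp]
lemma coordClamp_apply (hc : 0 ≤ c) (x : ℓ^p(ι, ℝ)) (i : ι) :
    coordClamp hc x i = clamp (c i) (x i) := rfl

variable [Fact (1 ≤ p)]

lemma norm_coordClamp_sub_coordClamp_le (hc : 0 ≤ c) (x y : ℓ^p(ι, ℝ)) :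
    ‖coordClamp hc x - coordClamp hc y‖ ≤ ‖x - y‖ :=
  norm_mono (zero_lt_one.trans_le Fact.out).ne' fun _ => abs_clamp_sub_clamp_le _ _ _

lemma norm_coordClamp_le (hc : 0 ≤ c) (hcp : Memℓp c p) (x : ℓ^p(ι, ℝ)) :
    ‖coordClamp hc x‖ ≤ ‖(⟨c, hcp⟩ : ℓ^p(ι, ℝ))‖ :=
  norm_mono (zero_lt_one.trans_le Fact.out).ne' fun i =>
    (abs_clamp_le (hc i)).trans (le_abs_self _)

lemma tendsto_coordClamp {α : Type*} {l : Filter α} (hp : p ≠ ∞) {c : α → ι → ℝ}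
    (hc : ∀ n, 0 ≤ c n) (hlim : ∀ i, Tendsto (c · i) l atTop) (x : ℓ^p(ι, ℝ)) :
    Tendsto (fun n => coordClamp (hc n) x) l (𝓝 x) := by
  refine tendsto_of_tendsto_apply_of_dominated hp (toNorm x) (fun i => ?_)
    fun n i => abs_clamp_sub_self_le (hc n i)
  refine tendsto_const_nhds.congr' ?_
  filter_upwards [(hlim i).eventually_ge_atTop |x i|] with n hn
  exact (clamp_eq_self hn).symm

end lp

section Trunc

noncomputable def truncLevel (n : ℕ) (k : ℕ) : ℝ := n / (k + 1)

lemma truncLevel_nonneg (n : ℕ) : 0 ≤ truncLevel n := fun _ => by unfold truncLevel; positivity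

lemma memℓp_truncLevel (n : ℕ) : Memℓp (truncLevel n) 2 := by
  refine memℓp_gen ?_
  have hsum : Summable fun k : ℕ => 1 / ((k : ℝ) + 1) ^ 2 := by
    simpa using (summable_nat_add_iff 1).2 (Real.summable_one_div_nat_pow.2 one_lt_two)
  refine (hsum.mul_left ((n : ℝ) ^ 2)).congr fun k => ?_
  rw [ENNReal.toReal_ofNat, Real.rpow_two, Real.norm_eq_abs, sq_abs, truncLevel, div_pow,
    mul_one_div]

lemma tendsto_truncLevel (k : ℕ) : Tendsto (truncLevel · k) atTop atTop :=
  tendsto_natCast_atTop_atTop.atTop_div_const (by positivity)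

variable {H : Type*} [NormedAddCommGroup H] [InnerProductSpace ℝ H]

lemma trunc_zero (e : ℕ → H) (n : ℕ) : trunc e n 0 = 0 := by
  have h (k : ℕ) : max (-((n : ℝ) / (k + 1))) (min 0 ((n : ℝ) / (k + 1))) = 0 :=
    clamp_zero (truncLevel_nonneg n k)
  simp [trunc, h]

variable (b : HilbertBasis ℕ ℝ H)

lemma trunc_eq_repr_symm (n : ℕ) (v : H) :
    trunc b n v = b.repr.symm (lp.coordClamp (truncLevel_nonneg n) (b.repr v)) := by
  refine HasSum.tsum_eq ?_
  convert b.hasSum_repr_symm _ using 3 with k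
  simp [b.repr_apply_apply, real_inner_comm, clamp, truncLevel]

lemma lipschitzWith_trunc (n : ℕ) : LipschitzWith 1 (trunc b n) := by
  refine LipschitzWith.mk_one fun v w => ?_
  rw [dist_eq_norm, dist_eq_norm, trunc_eq_repr_symm, trunc_eq_repr_symm, ← map_sub,
    LinearIsometryEquiv.norm_map, ← b.repr.norm_map, map_sub]
  exact lp.norm_coordClamp_sub_coordClamp_le _ _ _

lemma norm_trunc_le (n : ℕ) (v : H) :
    ‖trunc b n v‖ ≤ ‖(⟨truncLevel n, memℓp_truncLevel n⟩ : ℓ^2(ℕ, ℝ))‖ := by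
  rw [trunc_eq_repr_symm, LinearIsometryEquiv.norm_map]
  exact lp.norm_coordClamp_le _ _ _

lemma tendsto_trunc (v : H) : Tendsto (trunc b · v) atTop (𝓝 v) := by
  simp only [trunc_eq_repr_symm]
  simpa [Function.comp_def] using (b.repr.symm.continuous.tendsto _).comp
    (lp.tendsto_coordClamp ENNReal.ofNat_ne_top truncLevel_nonneg tendsto_truncLevel (b.repr v))

end Trunc

section Lp

variable {α H : Type*} [MeasurableSpace α] [NormedAddCommGroup H] {ν : Measure α} {p : ℝ≥0∞}

lemma tendsto_eLpNorm_zero_of_dominated (hp0 : p ≠ 0) (hp : p ≠ ∞) {G : ℕ → α → H}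
    {bound : α → ℝ} (hG : ∀ n, AEStronglyMeasurable (G n) ν) (hbound : MemLp bound p ν)
    (hle : ∀ n, ∀ᵐ x ∂ν, ‖G n x‖ ≤ bound x) (hlim : ∀ᵐ x ∂ν, Tendsto (G · x) atTop (𝓝 0)) :
    Tendsto (fun n => eLpNorm (G n) p ν) atTop (𝓝 0) := by
  have hq : 0 < p.toReal := ENNReal.toReal_pos hp0 hp
  have hint : Tendsto (fun n => ∫⁻ x, ‖G n x‖ₑ ^ p.toReal ∂ν) atTop (𝓝 0) := by
    simpa using tendsto_lintegral_of_dominated_convergence' (f := fun _ => 0)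
      (fun x => ‖bound x‖ₑ ^ p.toReal) (fun n => (hG n).enorm.pow_const _)
      (fun n => (hle n).mono fun x hx => ENNReal.rpow_le_rpow
        (enorm_le_iff_norm_le.2 (hx.trans (le_abs_self _))) hq.le)
      (lintegral_rpow_enorm_lt_top_of_eLpNorm_lt_top hp0 hp hbound.2).ne
      (hlim.mono fun x hx => by
        simpa [ENNReal.zero_rpow_of_pos hq] using
          ((continuous_enorm.tendsto (0 : H)).comp hx).ennrpow_const p.toReal)
  simp_rw [eLpNorm_eq_lintegral_rpow_enorm_toReal hp0 hp]
  simpa [ENNReal.zero_rpow_of_pos (inv_pos.2 hq)] using hint.ennrpow_const (1 / p.toReal)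

variable {X Y : α → H} {K : NNReal}

lemma LipschitzWith.memLp_comp_sub_comp {T : H → H} (hT : LipschitzWith K T)
    (hX : AEStronglyMeasurable X ν) (hY : AEStronglyMeasurable Y ν)
    (hXY : MemLp (fun x => X x - Y x) p ν) : MemLp (fun x => T (X x) - T (Y x)) p ν :=
  hXY.of_le_mul ((hT.continuous.comp_aestronglyMeasurable hX).sub
    (hT.continuous.comp_aestronglyMeasurable hY))
    (ae_of_all _ fun x => by simpa [dist_eq_norm] using hT.dist_le_mul (X x) (Y x))

lemma tendsto_eLpNorm_comp_sub_comp_sub (hp0 : p ≠ 0) (hp : p ≠ ∞) {T : ℕ → H → H}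
    (hT : ∀ n, LipschitzWith K (T n)) (hlim : ∀ v, Tendsto (T · v) atTop (𝓝 v))
    (hX : AEStronglyMeasurable X ν) (hY : AEStronglyMeasurable Y ν)
    (hXY : MemLp (fun x => X x - Y x) p ν) :
    Tendsto (fun n => eLpNorm (fun x => (T n (X x) - T n (Y x)) - (X x - Y x)) p ν)
      atTop (𝓝 0) := by
  refine tendsto_eLpNorm_zero_of_dominated hp0 hp
    (fun n => ((hT n).memLp_comp_sub_comp hX hY hXY).1.sub hXY.1)
    (hXY.norm.const_mul (K + 1)) (fun n => ae_of_all _ fun x => ?_)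
    (ae_of_all _ fun x => ?_)
  · calc ‖(T n (X x) - T n (Y x)) - (X x - Y x)‖
        ≤ ‖T n (X x) - T n (Y x)‖ + ‖X x - Y x‖ := norm_sub_le _ _
      _ ≤ K * ‖X x - Y x‖ + ‖X x - Y x‖ := by
          gcongr; simpa [dist_eq_norm] using (hT n).dist_le_mul (X x) (Y x)
      _ = (K + 1) * ‖X x - Y x‖ := by ring
  · simpa using ((hlim (X x)).sub (hlim (Y x))).sub_const (X x - Y x)

end Lp

theorem trunc_approximation_D1p_general
    {Ω E H : Type*} [MeasurableSpace Ω] [MeasurableSpace E]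
    [NormedAddCommGroup H] [InnerProductSpace ℝ H] [CompleteSpace H]
    (P : Measure Ω) [IsProbabilityMeasure P] (μ : Measure E)
    (N : Ω → Measure E)
    (p : ℝ≥0∞) (hp : 1 < p) (hp' : p ≠ ∞)
    (e : ℕ → H) (he : Orthonormal ℝ e)
    (hbasis : (Submodule.span ℝ (Set.range e)).topologicalClosure = ⊤)
    (F : Ω → H) (f : Measure E → H) (hFm : MemLp F p P)
    (hDF : MemLp (fun pr : Ω × E =>
        f (N pr.1 + Measure.dirac pr.2) - F pr.1) p (P.prod μ)) :
    (∀ n : ℕ,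
      MemLp (fun ω => trunc e n (F ω)) ∞ P ∧
      MemLp (fun ω => trunc e n (F ω)) p P ∧
      MemLp (fun pr : Ω × E =>
          trunc e n (f (N pr.1 + Measure.dirac pr.2)) - trunc e n (F pr.1)) p (P.prod μ)) ∧
    Tendsto (fun n => eLpNorm (fun ω => trunc e n (F ω) - F ω) p P) atTop (nhds 0) ∧
    Tendsto (fun n => eLpNorm (fun pr : Ω × E =>
        (trunc e n (f (N pr.1 + Measure.dirac pr.2)) - trunc e n (F pr.1))
          - (f (N pr.1 + Measure.dirac pr.2) - F pr.1)) p (P.prod μ)) atTop (nhds 0) := by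
  obtain ⟨b, rfl⟩ : ∃ b : HilbertBasis ℕ ℝ H, ⇑b = e :=
    ⟨.mk he hbasis.ge, HilbertBasis.coe_mk he hbasis.ge⟩
  have hp0 : p ≠ 0 := (zero_lt_one.trans hp).ne'
  have hF₁ : AEStronglyMeasurable (fun pr : Ω × E => F pr.1) (P.prod μ) :=
    hFm.1.comp_quasiMeasurePreserving Measure.quasiMeasurePreserving_fst
  have hG : AEStronglyMeasurable (fun pr : Ω × E => f (N pr.1 + Measure.dirac pr.2))
      (P.prod μ) := by
    simpa [Pi.add_def] using hDF.1.add hF₁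
  have hbdd (n : ℕ) : MemLp (fun ω => trunc b n (F ω)) ∞ P :=
    memLp_top_of_bound ((lipschitzWith_trunc b n).continuous.comp_aestronglyMeasurable hFm.1) _
      (ae_of_all _ fun ω => norm_trunc_le b n (F ω))
  refine ⟨fun n => ⟨hbdd n, (hbdd n).mono_exponent le_top,
    (lipschitzWith_trunc b n).memLp_comp_sub_comp hG hF₁ hDF⟩, ?_,
    tendsto_eLpNorm_comp_sub_comp_sub hp0 hp' (lipschitzWith_trunc b) (tendsto_trunc b) hG hF₁ hDF⟩
  simpa [trunc_zero] using tendsto_eLpNorm_comp_sub_comp_sub hp0 hp' (lipschitzWith_trunc b)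
    (tendsto_trunc b) hFm.1 aestronglyMeasurable_const (Y := fun _ => 0) (by simpa using hFm)

/-- **Approximation by bounded elements in `𝔻^{1,p}(H)`.**  For `F ∈ 𝔻^{1,p}(H)`
and an orthonormal basis `(e_k)` of `H`, the truncations
`F_n = ∑_k ((-n/k) ∨ ⟪F, e_k⟫ ∧ (n/k)) e_k` belong to `𝔻^{1,p}(H) ∩ L^∞(Ω;H)`
and `F_n → F` in `𝔻^{1,p}(H)`; hence `𝔻^{1,p}(H) ∩ L^∞(Ω;H)` is dense in
`𝔻^{1,p}(H)`.  Here `D_x F = f (N + δ_x) - F` for a representative `f` of `F`. -/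
theorem trunc_approximation_D1p
    {Ω E H : Type*} [MeasurableSpace Ω] [MeasurableSpace E]
    [NormedAddCommGroup H] [InnerProductSpace ℝ H] [CompleteSpace H]
    [TopologicalSpace.SeparableSpace H]
    (P : Measure Ω) [IsProbabilityMeasure P] (μ : Measure E) [SigmaFinite μ]
    (N : Ω → Measure E) (hMecke : MeckeAdd P μ N) (hN : Measurable N)
    (p : ℝ≥0∞) (hp : 1 < p) (hp' : p ≠ ∞)
    (e : ℕ → H) (he : Orthonormal ℝ e)
    (hbasis : (Submodule.span ℝ (Set.range e)).topologicalClosure = ⊤)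
    (F : Ω → H) (f : Measure E → H) (hf : StronglyMeasurable f)
    (hF : ∀ᵐ ω ∂P, F ω = f (N ω)) (hFm : MemLp F p P)
    (hDF : MemLp (fun pr : Ω × E =>
        f (N pr.1 + Measure.dirac pr.2) - F pr.1) p (P.prod μ)) :
    (∀ n : ℕ,
      MemLp (fun ω => trunc e n (F ω)) ∞ P ∧
      MemLp (fun ω => trunc e n (F ω)) p P ∧
      MemLp (fun pr : Ω × E =>
          trunc e n (f (N pr.1 + Measure.dirac pr.2)) - trunc e n (F pr.1)) p (P.prod μ)) ∧
    Tendsto (fun n => eLpNorm (fun ω => trunc e n (F ω) - F ω) p P) atTop (nhds 0) ∧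
    Tendsto (fun n => eLpNorm (fun pr : Ω × E =>
        (trunc e n (f (N pr.1 + Measure.dirac pr.2)) - trunc e n (F pr.1))
          - (f (N pr.1 + Measure.dirac pr.2) - F pr.1)) p (P.prod μ)) atTop (nhds 0) :=
  trunc_approximation_D1p_general P μ N p hp hp' e he hbasis F f hFm hDF
end

section
/- Every $H$-valued random variable of the form $F = \varphi(N(B_1), \ldots, N(B_n))$, where $B_1,\ldots,B_n$ are measurable sets of finite $\mu$-measure and $\varphi: \mathbb{N}_0^n \to H$ is bounded, belongs to $\mathbb{D}^{1,q}(H)$ for every $q > 1$; moreover, the space $\bigcap_{q>1}\mathbb{D}^{1,q}(H)\cap L^\infty(\Omega;H)$ is dense in $L^p(\Omega;H)$ for every $p>1$. -/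
open MeasureTheory Filter
open scoped ENNReal RealInnerProductSpace

open scoped Topology

namespace MeasureTheory

theorem StronglyMeasurable.apply_eq_of_comap_eq {α β H : Type*} [TopologicalSpace H] [T2Space H]
    {mβ : MeasurableSpace β} {r : α → β} {f : α → H} (hf : StronglyMeasurable[mβ.comap r] f)
    {a b : α} (hab : r a = r b) : f a = f b := by
  have happrox : ∀ n, hf.approx n a = hf.approx n b := by
    intro n
    obtain ⟨S, -, hS⟩ :=
      @SimpleFunc.measurableSet_fiber _ _ (mβ.comap r) (hf.approx n) (hf.approx n a)
    have hb : b ∈ r ⁻¹' S := by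
      rw [Set.mem_preimage, ← hab, ← Set.mem_preimage, hS]
      rfl
    rw [hS] at hb
    exact hb.symm
  exact tendsto_nhds_unique (hf.tendsto_approx a)
    (by simpa only [happrox] using hf.tendsto_approx b)

theorem unifIntegrable_of_forall_norm_le {ι α β : Type*} {m : MeasurableSpace α}
    {μ : Measure α} [NormedAddCommGroup β] {p : ℝ≥0∞} (hp : 1 ≤ p) (hp' : p ≠ ∞)
    {f : ι → α → β} (hf : ∀ i, AEStronglyMeasurable (f i) μ) {M : ℝ}
    (hM : ∀ i x, ‖f i x‖ ≤ M) : UnifIntegrable f p μ := by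
  refine unifIntegrable_of hp hp' hf fun ε hε => ⟨M.toNNReal + 1, fun i => ?_⟩
  have hempty : {x | M.toNNReal + 1 ≤ ‖f i x‖₊} = ∅ := by
    refine Set.eq_empty_of_forall_notMem fun x hx => ?_
    have : M + 1 ≤ ‖f i x‖ := by
      have := NNReal.coe_le_coe.2 hx
      push_cast at this
      linarith [M.le_coe_toNNReal]
    linarith [hM i x]
  simp [hempty]

end MeasureTheory

section NormTrunc

variable {E : Type*} [NormedAddCommGroup E] [NormedSpace ℝ E] {M : ℝ}

noncomputable def normTrunc (M : ℝ) (x : E) : E := (M / max M ‖x‖) • x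

theorem continuous_normTrunc (hM : 0 < M) : Continuous (normTrunc M : E → E) :=
  (continuous_const.div (continuous_const.max continuous_norm)
    fun _ => (hM.trans_le (le_max_left _ _)).ne').smul continuous_id

theorem norm_normTrunc_le (hM : 0 ≤ M) (x : E) : ‖normTrunc M x‖ ≤ M := by
  rw [normTrunc, norm_smul, Real.norm_of_nonneg (div_nonneg hM (hM.trans (le_max_left _ _))),
    div_mul_eq_mul_div]
  exact div_le_of_le_mul₀ (hM.trans (le_max_left _ _)) hM
    (mul_le_mul_of_nonneg_left (le_max_right _ _) hM)

theorem normTrunc_of_norm_le (hM : 0 < M) {x : E} (hx : ‖x‖ ≤ M) : normTrunc M x = x := by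
  rw [normTrunc, max_eq_left hx, div_self hM.ne', one_smul]

end NormTrunc

namespace MeasureTheory

variable {α H : Type*} {m0 : MeasurableSpace α} {Q : Measure α} [IsFiniteMeasure Q]
  {ℱ : Filtration ℕ m0} [NormedAddCommGroup H] [NormedSpace ℝ H]

/-- Lévy's upward theorem, applied to the indicators making up `s`. -/
theorem SimpleFunc.exists_tendsto_ae_of_le_iSup (hℱ : m0 ≤ ⨆ k, ℱ k) (s : SimpleFunc α H) :
    ∃ g : ℕ → α → H, (∀ k, StronglyMeasurable[ℱ k] (g k)) ∧
      ∀ᵐ a ∂Q, Tendsto (fun k => g k a) atTop (𝓝 (s a)) := by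
  induction s using SimpleFunc.induction with
  | @const c A hA =>
    refine ⟨fun k a => (Q[A.indicator (fun _ => (1 : ℝ)) | ℱ k] a) • c,
      fun k => (stronglyMeasurable_condExp (μ := Q)
        (f := A.indicator fun _ => (1 : ℝ))).smul_const c, ?_⟩
    have hlim := (((integrable_const (1 : ℝ)).indicator hA).tendsto_ae_condExp (μ := Q)
      ((stronglyMeasurable_const.indicator hA).mono hℱ))
    filter_upwards [hlim] with a ha
    convert ha.smul_const c using 2
    by_cases haA : a ∈ A <;> simp [haA]
  | add _ ih₁ ih₂ =>
    obtain ⟨g₁, hg₁, ht₁⟩ := ih₁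
    obtain ⟨g₂, hg₂, ht₂⟩ := ih₂
    refine ⟨g₁ + g₂, fun k => (hg₁ k).add (hg₂ k), ?_⟩
    filter_upwards [ht₁, ht₂] with a h₁ h₂
    simpa using h₁.add h₂

theorem MemLp.exists_bounded_stronglyMeasurable_filtration_lt (hℱ : m0 ≤ ⨆ k, ℱ k)
    {p : ℝ≥0∞} (hp : 1 ≤ p) (hp' : p ≠ ∞) {f : α → H} (hf : MemLp f p Q) {ε : ℝ≥0∞}
    (hε : 0 < ε) :
    ∃ (k : ℕ) (g : α → H), StronglyMeasurable[ℱ k] g ∧ (∃ M, ∀ a, ‖g a‖ ≤ M) ∧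
      eLpNorm (f - g) p Q < ε := by
  obtain ⟨s, hfs, -⟩ := hf.exists_simpleFunc_eLpNorm_sub_lt hp' (ENNReal.half_pos hε.ne').ne'
  obtain ⟨M₀, hM₀⟩ := s.exists_forall_norm_le
  set M := max M₀ 0 + 1
  have hM : 0 < M := by positivity
  have hsM : ∀ a, ‖s a‖ ≤ M := fun a => (hM₀ a).trans (by linarith [le_max_left M₀ 0])
  obtain ⟨g, hg, hgs⟩ := s.exists_tendsto_ae_of_le_iSup hℱ (Q := Q)
  have htrunc : ∀ k, StronglyMeasurable[ℱ k] (normTrunc M ∘ g k) := fun k =>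
    (continuous_normTrunc hM).comp_stronglyMeasurable (hg k)
  have hconv : Tendsto (fun k => eLpNorm (normTrunc M ∘ g k - ⇑s) p Q) atTop (𝓝 0) := by
    refine tendsto_Lp_finite_of_tendsto_ae hp hp'
      (fun k => ((htrunc k).mono (ℱ.le k)).aestronglyMeasurable)
      (s.memLp_of_isFiniteMeasure p Q)
      (unifIntegrable_of_forall_norm_le hp hp'
        (fun k => ((htrunc k).mono (ℱ.le k)).aestronglyMeasurable)
        fun k a => norm_normTrunc_le hM.le _) ?_
    filter_upwards [hgs] with a ha
    have hlim := ((continuous_normTrunc hM).tendsto (s a)).comp ha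
    rwa [normTrunc_of_norm_le hM (hsM a)] at hlim
  obtain ⟨k, hk⟩ := (hconv.eventually_lt_const (ENNReal.half_pos hε.ne')).exists
  refine ⟨k, normTrunc M ∘ g k, htrunc k, ⟨M, fun a => norm_normTrunc_le hM.le _⟩, ?_⟩
  calc eLpNorm (f - normTrunc M ∘ g k) p Q
      = eLpNorm ((f - ⇑s) + (⇑s - normTrunc M ∘ g k)) p Q := by rw [sub_add_sub_cancel]
    _ ≤ eLpNorm (f - ⇑s) p Q + eLpNorm (⇑s - normTrunc M ∘ g k) p Q :=
      eLpNorm_add_le (hf.1.sub s.aestronglyMeasurable)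
        (s.aestronglyMeasurable.sub ((htrunc k).mono (ℱ.le k)).aestronglyMeasurable) hp
    _ < ε / 2 + ε / 2 := by
      rw [eLpNorm_sub_comm s]
      exact ENNReal.add_lt_add hfs hk
    _ = ε := ENNReal.add_halves ε

end MeasureTheory

namespace MeasureTheory.Measure

variable {E : Type*} [MeasurableSpace E]

theorem measurable_restrict {S : Set E} (hS : MeasurableSet S) :
    Measurable fun ν : Measure E => ν.restrict S :=
  measurable_of_measurable_coe _ fun s hs => by
    simpa only [restrict_apply hs] using measurable_coe (hs.inter hS)

theorem restrict_add_dirac_of_notMem (ν : Measure E) {S : Set E} (hS : MeasurableSet S) {x : E}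
    (hx : x ∉ S) : (ν + dirac x).restrict S = ν.restrict S := by
  classical
  rw [restrict_add, restrict_dirac' hS, if_neg hx, add_zero]

end MeasureTheory.Measure

namespace MeasureTheory

variable {E : Type*} [MeasurableSpace E] {S : ℕ → Set E}

noncomputable def restrictFiltration (hS : Monotone S) (hSm : ∀ k, MeasurableSet (S k)) :
    Filtration ℕ (inferInstance : MeasurableSpace (Measure E)) where
  seq k := MeasurableSpace.comap (fun ν => ν.restrict (S k)) inferInstance
  mono' k l hkl := by
    have hrestrict : (fun ν : Measure E => ν.restrict (S k))
        = (fun ν => ν.restrict (S k)) ∘ fun ν => ν.restrict (S l) := by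
      ext1 ν
      simp only [Function.comp_apply, Measure.restrict_restrict (hSm k),
        Set.inter_eq_self_of_subset_left (hS hkl)]
    dsimp only
    rw [hrestrict, ← MeasurableSpace.comap_comp]
    exact MeasurableSpace.comap_mono (Measure.measurable_restrict (hSm k)).comap_le
  le' k := (Measure.measurable_restrict (hSm k)).comap_le

theorem le_iSup_restrictFiltration (hS : Monotone S) (hSm : ∀ k, MeasurableSet (S k))
    (hcover : ⋃ k, S k = Set.univ) :
    (inferInstance : MeasurableSpace (Measure E)) ≤ ⨆ k, restrictFiltration hS hSm k := by
  refine iSup₂_le fun s hs => Measurable.comap_le ?_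
  have hlim : (fun ν : Measure E => ν s) = fun ν => ⨆ k, ν.restrict (S k) s := by
    ext1 ν
    simp only [Measure.restrict_apply hs]
    rw [← Monotone.measure_iUnion fun k l hkl => Set.inter_subset_inter_right s (hS hkl),
      ← Set.inter_iUnion, hcover, Set.inter_univ]
  rw [hlim]
  exact Measurable.iSup fun k => ((Measure.measurable_coe hs).comp
    (comap_measurable _)).mono (le_iSup (fun k => restrictFiltration hS hSm k) k) le_rfl

end MeasureTheory

namespace MeasureTheory

variable {Ω E H : Type*} [MeasurableSpace Ω] [MeasurableSpace E] [NormedAddCommGroup H]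

theorem StronglyMeasurable.apply_add_dirac_of_comap_restrict {S : Set E} {g : Measure E → H}
    (hg : StronglyMeasurable[MeasurableSpace.comap (fun ν => ν.restrict S) inferInstance] g)
    (hS : MeasurableSet S) (ν : Measure E) {x : E} (hx : x ∉ S) : g (ν + Measure.dirac x) = g ν :=
  hg.apply_eq_of_comap_eq (ν.restrict_add_dirac_of_notMem hS hx)

theorem memLp_add_dirac_sub {P : Measure Ω} [IsFiniteMeasure P] {μ : Measure E} [SFinite μ]
    {N : Ω → Measure E} (hN : Measurable N) {g : Measure E → H} (hg : StronglyMeasurable g)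
    {C : ℝ} (hC : ∀ ν, ‖g ν‖ ≤ C) {S : Set E} (hS : MeasurableSet S) (hμS : μ S ≠ ∞)
    (hloc : ∀ ν, ∀ x ∉ S, g (ν + Measure.dirac x) = g ν) (q : ℝ≥0∞) :
    MemLp (fun pr : Ω × E => g (N pr.1 + Measure.dirac pr.2) - g (N pr.1)) q (P.prod μ) := by
  have hsupp : (fun pr : Ω × E => g (N pr.1 + Measure.dirac pr.2) - g (N pr.1))
      = (Set.univ ×ˢ S).indicator fun pr => g (N pr.1 + Measure.dirac pr.2) - g (N pr.1) := by
    ext1 pr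
    by_cases hx : pr.2 ∈ S
    · rw [Set.indicator_of_mem (Set.mk_mem_prod (Set.mem_univ _) hx)]
    · rw [Set.indicator_of_notMem fun h => hx (Set.mem_prod.1 h).2, hloc _ _ hx, sub_self]
  have : IsFiniteMeasure ((P.prod μ).restrict (Set.univ ×ˢ S)) := by
    rw [isFiniteMeasure_restrict, Measure.prod_prod]
    exact ENNReal.mul_ne_top (measure_ne_top P _) hμS
  have hmeas : Measurable fun pr : Ω × E => N pr.1 + Measure.dirac pr.2 :=
    (hN.comp measurable_fst).add (Measure.measurable_dirac.comp measurable_snd)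
  rw [hsupp, memLp_indicator_iff_restrict (MeasurableSet.univ.prod hS)]
  exact .of_bound ((hg.comp_measurable hmeas).sub
      (hg.comp_measurable (hN.comp measurable_fst))).aestronglyMeasurable (C + C)
    (.of_forall fun pr => (norm_sub_le _ _).trans (add_le_add (hC _) (hC _)))

end MeasureTheory

open MeasureTheory

theorem cylindrical_D1q_and_density_general
    {Ω E H : Type*} [MeasurableSpace Ω] [MeasurableSpace E]
    [NormedAddCommGroup H] [InnerProductSpace ℝ H]
    (P : Measure Ω) [IsProbabilityMeasure P] (μ : Measure E) [SigmaFinite μ]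
    (N : Ω → Measure E) (hN : Measurable N) :
    (∀ (n : ℕ) (B : Fin n → Set E), (∀ i, MeasurableSet (B i)) → (∀ i, μ (B i) < ∞) →
      ∀ φ : (Fin n → ℕ) → H, (∃ C : ℝ, ∀ v, ‖φ v‖ ≤ C) →
      ∀ q : ℝ≥0∞, 1 < q → q ≠ ∞ →
        MemLp (fun ω => φ fun i => ⌊((N ω) (B i)).toReal⌋₊) q P ∧
        MemLp (fun pr : Ω × E =>
            (φ fun i => ⌊((N pr.1 + Measure.dirac pr.2) (B i)).toReal⌋₊)
              - φ fun i => ⌊((N pr.1) (B i)).toReal⌋₊) q (P.prod μ)) ∧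
    (∀ p : ℝ≥0∞, 1 < p → p ≠ ∞ →
      ∀ (F : Ω → H) (f : Measure E → H), StronglyMeasurable f →
        (∀ᵐ ω ∂P, F ω = f (N ω)) → MemLp F p P →
        ∀ ε : ℝ≥0∞, 0 < ε →
          ∃ (G : Ω → H) (g : Measure E → H), StronglyMeasurable g ∧
            (∀ᵐ ω ∂P, G ω = g (N ω)) ∧ MemLp G ∞ P ∧
            (∀ q : ℝ≥0∞, 1 < q → q ≠ ∞ →
              MemLp G q P ∧
              MemLp (fun pr : Ω × E =>
                  g (N pr.1 + Measure.dirac pr.2) - G pr.1) q (P.prod μ)) ∧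
            eLpNorm (fun ω => F ω - G ω) p P < ε) := by
  refine ⟨fun n B hB hBμ φ ⟨C, hC⟩ q _ _ => ?_, fun p hp hp' F f hf hFf hF ε hε => ?_⟩
  · have hg : StronglyMeasurable fun ν : Measure E => φ fun i => ⌊(ν (B i)).toReal⌋₊ :=
      StronglyMeasurable.of_discrete.comp_measurable <| measurable_pi_lambda _ fun i =>
        (Measure.measurable_coe (hB i)).ennreal_toReal.nat_floor
    refine ⟨.of_bound (hg.comp_measurable hN).aestronglyMeasurable C (.of_forall fun _ => hC _),
      memLp_add_dirac_sub hN hg (fun _ => hC _) (.iUnion hB)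
      ((measure_iUnion_fintype_le μ B).trans_lt (ENNReal.sum_lt_top.2 fun i _ => hBμ i)).ne
      (fun ν x hx => ?_) q⟩
    have hxB : ∀ i, x ∉ B i := fun i hxi => hx (Set.mem_iUnion_of_mem i hxi)
    simp only [Measure.add_apply, Measure.dirac_apply' _ (hB _), Set.indicator_of_notMem (hxB _),
      add_zero]
  · set ℱ := restrictFiltration (monotone_spanningSets μ) (measurableSet_spanningSets μ)
    have hfQ : MemLp f p (P.map N) :=
      (memLp_map_measure_iff hf.aestronglyMeasurable hN.aemeasurable).2 (hF.ae_eq hFf)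
    obtain ⟨k, g, hgk, ⟨M, hM⟩, hfg⟩ := hfQ.exists_bounded_stronglyMeasurable_filtration_lt
      (le_iSup_restrictFiltration _ _ (iUnion_spanningSets μ)) hp.le hp' hε
    have hg : StronglyMeasurable g := hgk.mono (ℱ.le k)
    have hG : StronglyMeasurable (g ∘ N) := hg.comp_measurable hN
    refine ⟨g ∘ N, g, hg, .of_forall fun _ => rfl,
      memLp_top_of_bound hG.aestronglyMeasurable M (.of_forall fun _ => hM _),
      fun q _ _ => ⟨.of_bound hG.aestronglyMeasurable M (.of_forall fun _ => hM _),
        memLp_add_dirac_sub hN hg hM (measurableSet_spanningSets μ k)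
          (measure_spanningSets_lt_top μ k).ne
          (fun ν x hx => hgk.apply_add_dirac_of_comap_restrict
            (measurableSet_spanningSets μ k) ν hx) q⟩, ?_⟩
    calc eLpNorm (fun ω => F ω - (g ∘ N) ω) p P = eLpNorm ((f - g) ∘ N) p P :=
          eLpNorm_congr_ae (hFf.mono fun ω hω => by simp [hω])
      _ = eLpNorm (f - g) p (P.map N) :=
          (eLpNorm_map_measure (hf.sub hg).aestronglyMeasurable hN.aemeasurable).symm
      _ < ε := hfg

/-- **Cylindrical random variables and density.**
(1) Every `F = φ (N B₁, …, N Bₙ)` with `B_i` of finite `μ`-measure and `φ` bounded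
belongs to `𝔻^{1,q}(H)` for all `q > 1` (i.e. `F ∈ L^q` and `DF ∈ L^q(Ω × E;H)`,
where `D_x F = φ((N + δ_x)(B_i)) - φ(N(B_i))`).
(2) The space `⋂_{q>1} 𝔻^{1,q}(H) ∩ L^∞(Ω;H)` is dense in `L^p(Ω;H)` for every
`p > 1` (random variables in `L^p(Ω;H)` being, by the generating assumption on the
σ-algebra, exactly those of the form `f (N)` a.s.). -/
theorem cylindrical_D1q_and_density
    {Ω E H : Type*} [MeasurableSpace Ω] [MeasurableSpace E]
    [NormedAddCommGroup H] [InnerProductSpace ℝ H] [CompleteSpace H]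
    [TopologicalSpace.SeparableSpace H]
    (P : Measure Ω) [IsProbabilityMeasure P] (μ : Measure E) [SigmaFinite μ]
    (N : Ω → Measure E) (hMecke : MeckeAdd P μ N) (hN : Measurable N) :
    (∀ (n : ℕ) (B : Fin n → Set E), (∀ i, MeasurableSet (B i)) → (∀ i, μ (B i) < ∞) →
      ∀ φ : (Fin n → ℕ) → H, (∃ C : ℝ, ∀ v, ‖φ v‖ ≤ C) →
      ∀ q : ℝ≥0∞, 1 < q → q ≠ ∞ →
        MemLp (fun ω => φ fun i => ⌊((N ω) (B i)).toReal⌋₊) q P ∧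
        MemLp (fun pr : Ω × E =>
            (φ fun i => ⌊((N pr.1 + Measure.dirac pr.2) (B i)).toReal⌋₊)
              - φ fun i => ⌊((N pr.1) (B i)).toReal⌋₊) q (P.prod μ)) ∧
    (∀ p : ℝ≥0∞, 1 < p → p ≠ ∞ →
      ∀ (F : Ω → H) (f : Measure E → H), StronglyMeasurable f →
        (∀ᵐ ω ∂P, F ω = f (N ω)) → MemLp F p P →
        ∀ ε : ℝ≥0∞, 0 < ε →
          ∃ (G : Ω → H) (g : Measure E → H), StronglyMeasurable g ∧
            (∀ᵐ ω ∂P, G ω = g (N ω)) ∧ MemLp G ∞ P ∧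
            (∀ q : ℝ≥0∞, 1 < q → q ≠ ∞ →
              MemLp G q P ∧
              MemLp (fun pr : Ω × E =>
                  g (N pr.1 + Measure.dirac pr.2) - G pr.1) q (P.prod μ)) ∧
            eLpNorm (fun ω => F ω - G ω) p P < ε) :=
  cylindrical_D1q_and_density_general P μ N hN
end

section
/- Let $A \in \mathcal{E}$ and let $\mathcal{F}_A$ be the $\mathbb{P}$-completion of the $\sigma$-algebra generated by $\{N(A\cap B) : B \in \mathcal{E}\}$. If $F \in L^0(\Omega;H)$ is $\mathcal{F}_A$-measurable, then its Poisson difference $DF$ vanishes $\mathbb{P}\otimes\mu$-almost everywhere on $\Omega \times A^c$. -/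
open MeasureTheory Filter
open scoped ENNReal RealInnerProductSpace

/-- **Localization of the difference operator.**  Let `A ∈ ℰ` and let `F` be
`ℱ_A`-measurable, where `ℱ_A` is generated by `N(A ∩ B)`, `B ∈ ℰ` (by the
factorization lemma this means `F = f (N|_A)` a.s. for some measurable `f`).
Then `DF = 0` holds `P ⊗ μ`-a.e. on `Ω × Aᶜ`, where `D` is computed from the
representative `η ↦ f (η|_A)` of `F`. -/
theorem D_vanishes_off_A
    {Ω E H : Type*} [MeasurableSpace Ω] [MeasurableSpace E]
    [NormedAddCommGroup H] [InnerProductSpace ℝ H] [CompleteSpace H]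
    [TopologicalSpace.SeparableSpace H]
    (P : Measure Ω) [IsProbabilityMeasure P] (μ : Measure E) [SigmaFinite μ]
    (N : Ω → Measure E) (hMecke : MeckeAdd P μ N) (hN : Measurable N)
    (A : Set E) (hA : MeasurableSet A)
    (F : Ω → H) (f : Measure E → H) (hf : StronglyMeasurable f)
    (hF : ∀ᵐ ω ∂P, F ω = f ((N ω).restrict A)) :
    ∀ᵐ pr ∂(P.prod (μ.restrict Aᶜ)),
      f ((N pr.1 + Measure.dirac pr.2).restrict A) - F pr.1 = 0 := by
  have h1 : ∀ᵐ pr ∂(P.prod (μ.restrict Aᶜ)), F pr.1 = f ((N pr.1).restrict A) :=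
    Measure.quasiMeasurePreserving_fst.ae hF
  have h2 : ∀ᵐ pr ∂(P.prod (μ.restrict Aᶜ)), pr.2 ∈ Aᶜ :=
    Measure.quasiMeasurePreserving_snd.ae (ae_restrict_mem hA.compl)
  filter_upwards [h1, h2] with pr h1 h2
  have : (Measure.dirac pr.2).restrict A = 0 := by
    rw [Measure.restrict_eq_zero, Measure.dirac_apply' _ hA,
      Set.indicator_of_notMem h2]
  rw [Measure.restrict_add, this, add_zero, ← h1, sub_self]
end

section
/- The map $\Phi \mapsto \int_E \varepsilon_x^- \Phi(x)\, N(dx)$, where $\varepsilon_x^- \Phi(x) := f(N\setminus\delta_x, x)$ for a representative $f$ of $\Phi$ and the integral is a pathwise Bochner integral, is a well-defined continuous linear operator from $L^1(\Omega\times E; H)$ to $L^1(\Omega;H)$ satisfying $\|\int_E \varepsilon_x^-\Phi(x)\,N(dx)\|_{L^1(\Omega;H)} \le \|\Phi\|_{L^1(\Omega\times E;H)}$ and the Hilbert-space-valued Mecke identity $\mathbb{E}[\int_E \varepsilon_x^-\Phi(x)\,N(dx)] = \mathbb{E}[\int_E \Phi(x)\,\mu(dx)]$. -/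
/-!
The pathwise integrand `x ↦ f (N ω \ δ_x) x` is not known to be jointly measurable in `(ω, x)`,
so all integrals against `N ω` are a priori lower Lebesgue integrals. Measurability is recovered
from the Mecke formula itself: if `t ≤ w` with `w` integrable, the Mecke formula for `t` and for
`w - t` turns `∫⁻ t + ∫⁻ (w - t) ≤ ∫⁻ w` (lower integrals are only superadditive) into an
equality of integrals, which forces both lower integrals to be integrals of a.e.-measurable
functions, both in `ω` and, for a.e. `ω`, in `x`. Truncating at multiples of a strictly
positive integrable weight removes the bound `t ≤ w`. The scalar formula for real integrands
follows by splitting into positive and negative parts; the `H`-valued one by testing against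
the vectors of a countable Hilbert basis, which also yields strong measurability.
-/

open MeasureTheory Filter
open scoped ENNReal RealInnerProductSpace

-- Removal of a point mass: `η \ δ_x = η - δ_x` if `δ_x ≤ η`, and `η` otherwise.
open scoped Classical in
noncomputable def rmPt {E : Type*} [MeasurableSpace E] (η : Measure E) (x : E) : Measure E :=
  if Measure.dirac x ≤ η then η - Measure.dirac x else η

/-- **Mecke's formula** (remove-one form), characterizing Poisson random measures
with σ-finite intensity `μ`. -/
def MeckeSub {Ω E : Type*} [MeasurableSpace Ω] [MeasurableSpace E]
    (P : Measure Ω) (μ : Measure E) (N : Ω → Measure E) : Prop :=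
  ∀ f : Measure E → E → ℝ≥0∞, Measurable (Function.uncurry f) →
    ∫⁻ ω, ∫⁻ x, f (rmPt (N ω) x) x ∂(N ω) ∂P
      = ∫⁻ ω, ∫⁻ x, f (N ω) x ∂μ ∂P

open Function

theorem ENNReal.iSup_min_natCast_mul (a : ℝ≥0∞) {b : ℝ≥0∞} (hb : b ≠ 0) :
    ⨆ n : ℕ, min a (n * b) = a := by
  calc ⨆ n : ℕ, min a (n * b) = min a (⨆ n : ℕ, (n : ℝ≥0∞) * b) := (inf_iSup_eq _ _).symm
    _ = a := by rw [← ENNReal.iSup_mul, ENNReal.iSup_natCast, ENNReal.top_mul hb, min_top_right]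

section LowerIntegral

variable {α : Type*} [MeasurableSpace α] {ν : Measure α}

theorem aemeasurable_of_add_le_of_lintegral_le {u₁ u₂ v : α → ℝ≥0∞} (hv : Measurable v)
    (hle : ∀ a, u₁ a + u₂ a ≤ v a) (hge : ∫⁻ a, v a ∂ν ≤ ∫⁻ a, u₁ a ∂ν + ∫⁻ a, u₂ a ∂ν)
    (hfin : ∫⁻ a, v a ∂ν ≠ ∞) :
    AEMeasurable u₁ ν ∧ (fun a => u₁ a + u₂ a) =ᵐ[ν] v := by
  obtain ⟨g₁, hg₁, hg₁u, hg₁eq⟩ := exists_measurable_le_lintegral_eq ν u₁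
  obtain ⟨g₂, hg₂, hg₂u, hg₂eq⟩ := exists_measurable_le_lintegral_eq ν u₂
  have hgv : ∀ a, g₁ a + g₂ a ≤ v a := fun a => (add_le_add (hg₁u a) (hg₂u a)).trans (hle a)
  have hg : (fun a => g₁ a + g₂ a) =ᵐ[ν] v := by
    refine ae_eq_of_ae_le_of_lintegral_le (ae_of_all _ hgv)
      (ne_top_of_le_ne_top hfin (lintegral_mono hgv)) hv.aemeasurable ?_
    calc ∫⁻ a, v a ∂ν ≤ ∫⁻ a, u₁ a ∂ν + ∫⁻ a, u₂ a ∂ν := hge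
      _ = ∫⁻ a, g₁ a + g₂ a ∂ν := by rw [hg₁eq, hg₂eq, lintegral_add_left hg₁]
  have hgu : ∀ᵐ a ∂ν, g₁ a = u₁ a ∧ g₁ a + g₂ a = u₁ a + u₂ a := by
    filter_upwards [hg, ae_lt_top' hv.aemeasurable hfin] with a ha hfin
    have hsum : g₁ a + g₂ a = u₁ a + u₂ a :=
      le_antisymm (add_le_add (hg₁u a) (hg₂u a)) (ha ▸ hle a)
    have hg₂fin : g₂ a ≠ ∞ := ne_top_of_le_ne_top (ha ▸ hfin.ne) le_add_self
    refine ⟨le_antisymm (hg₁u a) (ENNReal.le_of_add_le_add_right hg₂fin ?_), hsum⟩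
    exact (add_le_add le_rfl (hg₂u a)).trans hsum.ge
  exact ⟨hg₁.aemeasurable.congr (hgu.mono fun a h => h.1),
    (hgu.and hg).mono fun a h => h.1.2.symm.trans h.2⟩

theorem integrable_integral_toReal_sub_toReal {p q : α → ℝ≥0∞} (hp : AEMeasurable p ν)
    (hq : AEMeasurable q ν) (hpf : ∫⁻ a, p a ∂ν ≠ ∞) (hqf : ∫⁻ a, q a ∂ν ≠ ∞) :
    Integrable (fun a => (p a).toReal - (q a).toReal) ν ∧
      ∫ a, (p a).toReal - (q a).toReal ∂ν = (∫⁻ a, p a ∂ν).toReal - (∫⁻ a, q a ∂ν).toReal := by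
  have hpi := integrable_toReal_of_lintegral_ne_top hp hpf
  have hqi := integrable_toReal_of_lintegral_ne_top hq hqf
  refine ⟨hpi.sub hqi, ?_⟩
  rw [integral_sub hpi hqi, integral_toReal hp (ae_lt_top' hp hpf),
    integral_toReal hq (ae_lt_top' hq hqf)]

end LowerIntegral

theorem integrable_integral_integral_eq_toReal_sub_toReal {Ω E : Type*} [MeasurableSpace Ω]
    [MeasurableSpace E] {P : Measure Ω} {ρ : Ω → Measure E} {G : Ω → E → ℝ}
    (hpath : ∀ᵐ ω ∂P, AEMeasurable (fun x => ENNReal.ofReal (G ω x)) (ρ ω) ∧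
      AEMeasurable (fun x => ENNReal.ofReal (-G ω x)) (ρ ω))
    (hpos : AEMeasurable (fun ω => ∫⁻ x, ENNReal.ofReal (G ω x) ∂(ρ ω)) P)
    (hneg : AEMeasurable (fun ω => ∫⁻ x, ENNReal.ofReal (-G ω x) ∂(ρ ω)) P)
    (hpos_fin : ∫⁻ ω, ∫⁻ x, ENNReal.ofReal (G ω x) ∂(ρ ω) ∂P ≠ ∞)
    (hneg_fin : ∫⁻ ω, ∫⁻ x, ENNReal.ofReal (-G ω x) ∂(ρ ω) ∂P ≠ ∞) :
    (∀ᵐ ω ∂P, Integrable (G ω) (ρ ω)) ∧ Integrable (fun ω => ∫ x, G ω x ∂(ρ ω)) P ∧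
      ∫ ω, ∫ x, G ω x ∂(ρ ω) ∂P = (∫⁻ ω, ∫⁻ x, ENNReal.ofReal (G ω x) ∂(ρ ω) ∂P).toReal
        - (∫⁻ ω, ∫⁻ x, ENNReal.ofReal (-G ω x) ∂(ρ ω) ∂P).toReal := by
  have hinner : ∀ᵐ ω ∂P, Integrable (G ω) (ρ ω) ∧ ∫ x, G ω x ∂(ρ ω)
      = (∫⁻ x, ENNReal.ofReal (G ω x) ∂(ρ ω)).toReal
        - (∫⁻ x, ENNReal.ofReal (-G ω x) ∂(ρ ω)).toReal := by
    filter_upwards [hpath, ae_lt_top' hpos hpos_fin, ae_lt_top' hneg hneg_fin]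
      with ω ⟨hp, hq⟩ hpf hqf
    simpa only [ENNReal.toReal_ofReal', max_zero_sub_max_neg_zero_eq_self] using
      integrable_integral_toReal_sub_toReal hp hq hpf.ne hqf.ne
  obtain ⟨hint, heq⟩ := integrable_integral_toReal_sub_toReal hpos hneg hpos_fin hneg_fin
  refine ⟨hinner.mono fun ω h => h.1, hint.congr (hinner.mono fun ω h => h.2.symm), ?_⟩
  rw [integral_congr_ae (hinner.mono fun ω h => h.2), heq]

section HilbertBasis

variable {H : Type*} [NormedAddCommGroup H] [InnerProductSpace ℝ H]

theorem Orthonormal.countable [TopologicalSpace.SeparableSpace H] {ι : Type*} {b : ι → H}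
    (hb : Orthonormal ℝ b) : Countable ι := by
  refine Pairwise.countable_of_isOpen_disjoint (s := fun i => Metric.ball (b i) (1 / 2))
    (fun i j hij => Metric.ball_disjoint_ball ?_) (fun _ => Metric.isOpen_ball)
    (fun _ => Metric.nonempty_ball.2 one_half_pos)
  have hsq : ‖b i - b j‖ ^ 2 = 2 := by
    rw [norm_sub_sq_real, hb.1, hb.1, hb.2 hij]
    norm_num
  rw [dist_eq_norm]
  nlinarith [norm_nonneg (b i - b j)]

theorem HilbertBasis.aestronglyMeasurable_of_inner {ι α : Type*} [Countable ι]
    [MeasurableSpace α] {ν : Measure α} (b : HilbertBasis ι ℝ H) {F : α → H}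
    (h : ∀ i, AEMeasurable (fun a => ⟪b i, F a⟫) ν) : AEStronglyMeasurable F ν := by
  refine aestronglyMeasurable_of_tendsto_ae (u := atTop)
    (f := fun s a => ∑ i ∈ s, ⟪b i, F a⟫ • b i)
    (fun s => Finset.aestronglyMeasurable_fun_sum _ fun i _ =>
      (h i).aestronglyMeasurable.smul_const _) (ae_of_all _ fun a => ?_)
  have hsum := b.hasSum_repr (F a)
  simp only [HilbertBasis.repr_apply_apply] at hsum
  exact hsum

end HilbertBasis

section RandomMeasure

variable {Ω E : Type*} [MeasurableSpace Ω] [MeasurableSpace E]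
  {P : Measure Ω} {μ : Measure E} {N : Ω → Measure E}

theorem lintegral_lintegral_comp_eq_lintegral_prod [SFinite μ] (hN : Measurable N)
    {t : Measure E → E → ℝ≥0∞} (ht : Measurable (uncurry t)) :
    ∫⁻ ω, ∫⁻ x, t (N ω) x ∂μ ∂P = ∫⁻ pr, t (N pr.1) pr.2 ∂(P.prod μ) :=
  (lintegral_prod (fun pr : Ω × E => t (N pr.1) pr.2)
    (ht.comp ((hN.comp measurable_fst).prodMk measurable_snd)).aemeasurable).symm

namespace MeckeSub

theorem lintegral_rmPt_eq_lintegral_prod [SFinite μ] (hMecke : MeckeSub P μ N)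
    (hN : Measurable N) {t : Measure E → E → ℝ≥0∞} (ht : Measurable (uncurry t)) :
    ∫⁻ ω, ∫⁻ x, t (rmPt (N ω) x) x ∂(N ω) ∂P = ∫⁻ pr, t (N pr.1) pr.2 ∂(P.prod μ) := by
  rw [hMecke t ht, lintegral_lintegral_comp_eq_lintegral_prod hN ht]

theorem aemeasurable_rmPt_of_le [IsFiniteMeasure P] [SFinite μ] (hMecke : MeckeSub P μ N)
    (hN : Measurable N) {t : Measure E → E → ℝ≥0∞} (ht : Measurable (uncurry t))
    {w : E → ℝ≥0∞} (hw : Measurable w) (hwμ : ∫⁻ x, w x ∂μ ≠ ∞) (htw : ∀ η x, t η x ≤ w x) :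
    AEMeasurable (fun ω => ∫⁻ x, t (rmPt (N ω) x) x ∂(N ω)) P ∧
      ∀ᵐ ω ∂P, AEMeasurable (fun x => t (rmPt (N ω) x) x) (N ω) := by
  set s : Measure E → E → ℝ≥0∞ := fun η x => w x - t η x
  have hs : Measurable (uncurry s) := (hw.comp measurable_snd).sub ht
  have hts : ∀ η x, t η x + s η x = w x := fun η x => add_tsub_cancel_of_le (htw η x)
  have hwN : Measurable fun ω => ∫⁻ x, w x ∂(N ω) := (Measure.measurable_lintegral hw).comp hN
  have hwP : ∫⁻ ω, ∫⁻ x, w x ∂(N ω) ∂P = ∫⁻ ω, ∫⁻ x, w x ∂μ ∂P :=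
    hMecke (fun _ x => w x) (hw.comp measurable_snd)
  have hfin : ∫⁻ ω, ∫⁻ x, w x ∂(N ω) ∂P ≠ ∞ := by
    rw [hwP, lintegral_const]
    exact ENNReal.mul_ne_top hwμ (measure_ne_top _ _)
  have hle : ∀ ω, ∫⁻ x, t (rmPt (N ω) x) x ∂(N ω) + ∫⁻ x, s (rmPt (N ω) x) x ∂(N ω)
      ≤ ∫⁻ x, w x ∂(N ω) := fun ω =>
    (le_lintegral_add _ _).trans_eq (lintegral_congr fun x => hts _ x)
  have hge : ∫⁻ ω, ∫⁻ x, w x ∂(N ω) ∂P ≤ ∫⁻ ω, ∫⁻ x, t (rmPt (N ω) x) x ∂(N ω) ∂P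
      + ∫⁻ ω, ∫⁻ x, s (rmPt (N ω) x) x ∂(N ω) ∂P := by
    have hsum : ∀ ω, ∫⁻ x, t (N ω) x ∂μ + ∫⁻ x, s (N ω) x ∂μ = ∫⁻ x, w x ∂μ := fun ω => by
      have htN : Measurable fun x => t (N ω) x := ht.comp measurable_prodMk_left
      rw [← lintegral_add_left htN]
      exact lintegral_congr fun x => hts _ x
    have htμ : Measurable fun ω => ∫⁻ x, t (N ω) x ∂μ := ht.lintegral_prod_right'.comp hN
    rw [hwP, hMecke t ht, hMecke s hs, ← lintegral_add_left htμ]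
    exact (lintegral_congr hsum).ge
  obtain ⟨ht_meas, hts_eq⟩ := aemeasurable_of_add_le_of_lintegral_le hwN hle hge hfin
  refine ⟨ht_meas, ?_⟩
  filter_upwards [hts_eq, ae_lt_top' hwN.aemeasurable hfin] with ω hω hωfin
  exact (aemeasurable_of_add_le_of_lintegral_le hw (fun x => (hts _ x).le) hω.ge hωfin.ne).1

theorem aemeasurable_rmPt [IsFiniteMeasure P] [SigmaFinite μ] (hMecke : MeckeSub P μ N)
    (hN : Measurable N) {t : Measure E → E → ℝ≥0∞} (ht : Measurable (uncurry t)) :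
    AEMeasurable (fun ω => ∫⁻ x, t (rmPt (N ω) x) x ∂(N ω)) P ∧
      ∀ᵐ ω ∂P, AEMeasurable (fun x => t (rmPt (N ω) x) x) (N ω) := by
  obtain ⟨w, hw0, hw, hwμ⟩ := exists_pos_lintegral_lt_of_sigmaFinite μ one_ne_zero
  set tn : ℕ → Measure E → E → ℝ≥0∞ := fun n η x => min (t η x) (n * w x)
  have hcap : ∀ n, AEMeasurable (fun ω => ∫⁻ x, tn n (rmPt (N ω) x) x ∂(N ω)) P ∧
      ∀ᵐ ω ∂P, AEMeasurable (fun x => tn n (rmPt (N ω) x) x) (N ω) := fun n =>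
    hMecke.aemeasurable_rmPt_of_le hN
      (ht.min ((hw.coe_nnreal_ennreal.comp measurable_snd).const_mul _))
      (hw.coe_nnreal_ennreal.const_mul _)
      (by rw [lintegral_const_mul _ hw.coe_nnreal_ennreal]
          exact ENNReal.mul_ne_top (ENNReal.natCast_ne_top n) (hwμ.trans ENNReal.one_lt_top).ne)
      (fun η x => min_le_right _ _)
  have hsup : ∀ η x, ⨆ n, tn n η x = t η x := fun η x =>
    ENNReal.iSup_min_natCast_mul _ (ENNReal.coe_ne_zero.2 (hw0 x).ne')
  have hpath : ∀ᵐ ω ∂P, ∀ n, AEMeasurable (fun x => tn n (rmPt (N ω) x) x) (N ω) :=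
    ae_all_iff.2 fun n => (hcap n).2
  have hlim : ∀ᵐ ω ∂P, ⨆ n, ∫⁻ x, tn n (rmPt (N ω) x) x ∂(N ω)
      = ∫⁻ x, t (rmPt (N ω) x) x ∂(N ω) := by
    filter_upwards [hpath] with ω hω
    simp_rw [← lintegral_iSup' hω (ae_of_all _ fun x m n hmn => by
      dsimp only [tn]; gcongr), hsup]
  refine ⟨(AEMeasurable.iSup fun n => (hcap n).1).congr hlim, ?_⟩
  filter_upwards [hpath] with ω hω
  simpa only [hsup] using AEMeasurable.iSup hω

theorem ae_ae_eq_zero_rmPt [IsFiniteMeasure P] [SigmaFinite μ] (hMecke : MeckeSub P μ N)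
    (hN : Measurable N) {t : Measure E → E → ℝ≥0∞} (ht : Measurable (uncurry t))
    (h0 : (fun pr : Ω × E => t (N pr.1) pr.2) =ᵐ[P.prod μ] 0) :
    ∀ᵐ ω ∂P, (fun x => t (rmPt (N ω) x) x) =ᵐ[N ω] 0 := by
  obtain ⟨hint, hpath⟩ := hMecke.aemeasurable_rmPt hN ht
  have hzero : ∫⁻ ω, ∫⁻ x, t (rmPt (N ω) x) x ∂(N ω) ∂P = 0 := by
    rw [hMecke.lintegral_rmPt_eq_lintegral_prod hN ht, lintegral_congr_ae h0]
    simp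
  filter_upwards [(lintegral_eq_zero_iff' hint).1 hzero, hpath] with ω hω hω_meas
  exact (lintegral_eq_zero_iff' hω_meas).1 hω

theorem integral_rmPt [IsFiniteMeasure P] [SigmaFinite μ] (hMecke : MeckeSub P μ N)
    (hN : Measurable N) {g : Measure E → E → ℝ} (hg : Measurable (uncurry g))
    (hint : Integrable (fun pr : Ω × E => g (N pr.1) pr.2) (P.prod μ)) :
    (∀ᵐ ω ∂P, Integrable (fun x => g (rmPt (N ω) x) x) (N ω)) ∧
      Integrable (fun ω => ∫ x, g (rmPt (N ω) x) x ∂(N ω)) P ∧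
      ∫ ω, ∫ x, g (rmPt (N ω) x) x ∂(N ω) ∂P = ∫ ω, ∫ x, g (N ω) x ∂μ ∂P := by
  have hpos : Measurable (uncurry fun η x => ENNReal.ofReal (g η x)) :=
    ENNReal.measurable_ofReal.comp hg
  have hneg : Measurable (uncurry fun η x => ENNReal.ofReal (-g η x)) :=
    ENNReal.measurable_ofReal.comp hg.neg
  have hpos_fin : ∫⁻ ω, ∫⁻ x, ENNReal.ofReal (g (N ω) x) ∂μ ∂P ≠ ∞ := by
    rw [lintegral_lintegral_comp_eq_lintegral_prod hN hpos]
    exact hint.lintegral_lt_top.ne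
  have hneg_fin : ∫⁻ ω, ∫⁻ x, ENNReal.ofReal (-g (N ω) x) ∂μ ∂P ≠ ∞ := by
    rw [lintegral_lintegral_comp_eq_lintegral_prod hN hneg]
    exact hint.neg.lintegral_lt_top.ne
  obtain ⟨hposL, hpos_path⟩ := hMecke.aemeasurable_rmPt hN hpos
  obtain ⟨hnegL, hneg_path⟩ := hMecke.aemeasurable_rmPt hN hneg
  obtain ⟨hL_path, hL_int, hL⟩ := integrable_integral_integral_eq_toReal_sub_toReal
    (ρ := N) (G := fun ω x => g (rmPt (N ω) x) x) (hpos_path.and hneg_path) hposL hnegL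
    (by rwa [hMecke _ hpos]) (by rwa [hMecke _ hneg])
  obtain ⟨-, -, hR⟩ := integrable_integral_integral_eq_toReal_sub_toReal
    (ρ := fun _ => μ) (G := fun ω x => g (N ω) x)
    (ae_of_all _ fun ω => ⟨(hpos.comp measurable_prodMk_left).aemeasurable,
      (hneg.comp measurable_prodMk_left).aemeasurable⟩)
    (hpos.lintegral_prod_right'.comp hN).aemeasurable
    (hneg.lintegral_prod_right'.comp hN).aemeasurable hpos_fin hneg_fin
  exact ⟨hL_path, hL_int, by rw [hL, hR, hMecke _ hpos, hMecke _ hneg]⟩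

end MeckeSub

end RandomMeasure

/-- **`H`-valued Mecke formula.**  For `Φ ∈ L¹(Ω × E; H)` with representative `f`
(so `Φ (ω, x) = f (N ω) x`), the pathwise Bochner integral
`∫_E ε⁻_x Φ(x) N(dx) = ∫_E f (N \ δ_x) x N(dx)` is `P`-a.s. defined, the map
`Φ ↦ ∫_E ε⁻_x Φ(x) N(dx)` is a contraction from `L¹(Ω × E;H)` to `L¹(Ω;H)`
(hence well-defined and continuous: it does not depend on the representative),
and `𝔼[∫_E ε⁻_x Φ(x) N(dx)] = 𝔼[∫_E Φ(x) μ(dx)]`. -/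
theorem H_valued_Mecke
    {Ω E H : Type*} [MeasurableSpace Ω] [MeasurableSpace E]
    [NormedAddCommGroup H] [InnerProductSpace ℝ H] [CompleteSpace H]
    [TopologicalSpace.SeparableSpace H]
    (P : Measure Ω) [IsProbabilityMeasure P] (μ : Measure E) [SigmaFinite μ]
    (N : Ω → Measure E) (hMecke : MeckeSub P μ N) (hN : Measurable N)
    (f : Measure E → E → H) (hf : StronglyMeasurable (Function.uncurry f))
    (hint : Integrable (fun pr : Ω × E => f (N pr.1) pr.2) (P.prod μ)) :
    (∀ᵐ ω ∂P, Integrable (fun x => f (rmPt (N ω) x) x) (N ω)) ∧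
    eLpNorm (fun ω => ∫ x, f (rmPt (N ω) x) x ∂(N ω)) 1 P
      ≤ eLpNorm (fun pr : Ω × E => f (N pr.1) pr.2) 1 (P.prod μ) ∧
    (∫ ω, (∫ x, f (rmPt (N ω) x) x ∂(N ω)) ∂P = ∫ ω, (∫ x, f (N ω) x ∂μ) ∂P) ∧
    (∀ g : Measure E → E → H, StronglyMeasurable (Function.uncurry g) →
      (∀ᵐ pr ∂(P.prod μ), f (N pr.1) pr.2 = g (N pr.1) pr.2) →
      ∀ᵐ ω ∂P, ∫ x, f (rmPt (N ω) x) x ∂(N ω) = ∫ x, g (rmPt (N ω) x) x ∂(N ω)) := by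
  obtain ⟨w, b, -⟩ := exists_hilbertBasis ℝ H
  have := b.orthonormal.countable
  have hcoord := fun u : H => hMecke.integral_rmPt hN (g := fun η x => ⟪u, f η x⟫)
    (stronglyMeasurable_const.inner hf).measurable (hint.const_inner u)
  have hf_enorm : Measurable (uncurry fun η x => ‖f η x‖ₑ) := hf.enorm
  have hnorm := hMecke.lintegral_rmPt_eq_lintegral_prod hN hf_enorm
  have hpath : ∀ᵐ ω ∂P, Integrable (fun x => f (rmPt (N ω) x) x) (N ω) := by
    filter_upwards [ae_all_iff.2 fun i => (hcoord (b i)).1,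
      ae_lt_top' (hMecke.aemeasurable_rmPt hN hf_enorm).1 (hnorm ▸ hint.2.ne)] with ω hb hfin
    exact ⟨b.aestronglyMeasurable_of_inner fun i => (hb i).aemeasurable, hfin⟩
  have hcontr : eLpNorm (fun ω => ∫ x, f (rmPt (N ω) x) x ∂(N ω)) 1 P
      ≤ eLpNorm (fun pr : Ω × E => f (N pr.1) pr.2) 1 (P.prod μ) := by
    simp only [eLpNorm_one_eq_lintegral_enorm]
    exact (lintegral_mono fun ω => enorm_integral_le_lintegral_enorm _).trans_eq hnorm
  have hinner : ∀ u : H, (fun ω => ⟪u, ∫ x, f (rmPt (N ω) x) x ∂(N ω)⟫)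
      =ᵐ[P] fun ω => ∫ x, ⟪u, f (rmPt (N ω) x) x⟫ ∂(N ω) := fun u =>
    hpath.mono fun ω hω => (integral_inner hω u).symm
  have hL : Integrable (fun ω => ∫ x, f (rmPt (N ω) x) x ∂(N ω)) P := by
    refine memLp_one_iff_integrable.1 ⟨b.aestronglyMeasurable_of_inner fun i =>
      (hcoord (b i)).2.1.aemeasurable.congr (hinner (b i)).symm, ?_⟩
    exact hcontr.trans_lt (memLp_one_iff_integrable.2 hint).eLpNorm_lt_top
  refine ⟨hpath, hcontr, ext_inner_left ℝ fun u => ?_, fun g hg hfg => ?_⟩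
  · rw [← integral_inner hL, integral_congr_ae (hinner u), (hcoord u).2.2,
      ← integral_inner hint.integral_prod_left]
    exact integral_congr_ae (hint.prod_right_ae.mono fun ω hω => integral_inner hω u)
  · have hfg_enorm : Measurable (uncurry fun η x => ‖f η x - g η x‖ₑ) := (hf.sub hg).enorm
    filter_upwards [hMecke.ae_ae_eq_zero_rmPt hN hfg_enorm
      (hfg.mono fun pr h => by simp [h])] with ω hω
    exact integral_congr_ae (hω.mono fun x hx => sub_eq_zero.1 (enorm_eq_zero.1 hx))
end

section
/- Define the pathwise Kabanov–Skorohod integral $\delta(\Phi) := \int_E \varepsilon_x^-\Phi(x)\,N(dx) - \int_E \Phi(x)\,\mu(dx)$ for $\Phi \in L^1(\Omega\times E;H)$. Then for all $F \in L^\infty(\Omega;H)$ and $\Phi \in L^1(\Omega\times E;H)$ the duality formula $\mathbb{E}\langle F, \delta(\Phi)\rangle = \mathbb{E}\int_E \langle D_x F, \Phi(x)\rangle\,\mu(dx)$ holds. -/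
open MeasureTheory Filter
open scoped ENNReal RealInnerProductSpace

/-- Pathwise **Kabanov–Skorohod integral**
`δ(Φ) = ∫_E ε⁻_x Φ(x) N(dx) - ∫_E Φ(x) μ(dx)`, written in terms of a
representative `f` of `Φ`. -/
noncomputable def pathDelta {E H : Type*} [MeasurableSpace E]
    [NormedAddCommGroup H] [NormedSpace ℝ H]
    (μ : Measure E) (f : Measure E → E → H) (η : Measure E) : H :=
  (∫ x, f (rmPt η x) x ∂η) - ∫ x, f η x ∂μ

/-!
Mecke's add-one formula identifies the Campbell measure `∫ P(dω) ∫ N ω(dx) δ_(N ω, x)` with the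
image of `P ⊗ μ` under `(ω, x) ↦ (N ω + δ_x, x)`; the remove-one formula forces `δ_x ≤ N ω` for
`N ω`-a.e. `x`, so that `ε⁻_x` is a genuine subtraction there. A measurable function of `(η, x)`
depends on `η` only through countably many values `η (t i)`, which makes
`(η, x) ↦ f (η - δ_x) x` jointly measurable. Integrating `⟪g η, f (η - δ_x) x⟫` against the
Campbell measure turns `𝔼 ⟪F, ∫ ε⁻_x Φ(x) N(dx)⟫` into `𝔼 ∫ ⟪g (N + δ_x), Φ(x)⟫ μ(dx)`, and the
compensator `∫ Φ(x) μ(dx)` contributes the `-F` term.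
-/

open Function ProbabilityTheory

theorem MeasurableSpace.exists_countable_measurableSet_biSup {α ι : Type*}
    {m : ι → MeasurableSpace α} {S : Set α} (hS : MeasurableSet[⨆ i, m i] S) :
    ∃ c : Set ι, c.Countable ∧ MeasurableSet[⨆ i ∈ c, m i] S := by
  let M : MeasurableSpace α :=
    { MeasurableSet' := fun S => ∃ c : Set ι, c.Countable ∧ MeasurableSet[⨆ i ∈ c, m i] S
      measurableSet_empty := ⟨∅, Set.countable_empty, @MeasurableSet.empty _ (⨆ i ∈ ∅, m i)⟩
      measurableSet_compl := fun _ ⟨c, hc, h⟩ => ⟨c, hc, h.compl⟩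
      measurableSet_iUnion := fun S hS => by
        choose c hc h using hS
        refine ⟨⋃ n, c n, Set.countable_iUnion hc, MeasurableSet.iUnion fun n => ?_⟩
        have hle : ⨆ i ∈ c n, m i ≤ ⨆ i ∈ ⋃ n, c n, m i :=
          biSup_mono fun i hi => Set.mem_iUnion_of_mem n hi
        exact hle _ (h n) }
  have hM : ⨆ i, m i ≤ M := iSup_le fun i S hS =>
    ⟨{i}, Set.countable_singleton i, le_biSup m (Set.mem_singleton i) S hS⟩
  exact hM S hS

theorem MeasureTheory.StronglyMeasurable.exists_countable_biSup {α β ι : Type*}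
    [TopologicalSpace β] {m : ι → MeasurableSpace α} {g : α → β}
    (hg : StronglyMeasurable[⨆ i, m i] g) :
    ∃ c : Set ι, c.Countable ∧ StronglyMeasurable[⨆ i ∈ c, m i] g := by
  let _ : MeasurableSpace α := ⨆ i, m i
  choose c hc hfiber using fun n (y : β) =>
    MeasurableSpace.exists_countable_measurableSet_biSup ((hg.approx n).measurableSet_fiber y)
  let C := ⋃ n, ⋃ y ∈ Set.range (hg.approx n), c n y
  refine ⟨C, Set.countable_iUnion fun n => (hg.approx n).finite_range.countable.biUnion
    fun y _ => hc n y, ⟨fun n => @SimpleFunc.mk α (⨆ i ∈ C, m i) β (hg.approx n) (fun y => ?_)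
      (hg.approx n).finite_range, hg.tendsto_approx⟩⟩
  by_cases hy : y ∈ Set.range (hg.approx n)
  · have hle : ⨆ i ∈ c n y, m i ≤ ⨆ i ∈ C, m i :=
      biSup_mono fun i hi => Set.mem_iUnion_of_mem n (Set.mem_biUnion hy hi)
    exact hle _ (hfiber n y)
  · rw [Set.preimage_singleton_eq_empty.2 hy]
    exact @MeasurableSet.empty _ (⨆ i ∈ C, m i)

namespace MeasureTheory.Measure

variable {E : Type*} [MeasurableSpace E]

theorem measurableSpace_prod_eq_iSup :
    (inferInstance : MeasurableSpace (Measure E × E)) =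
      ⨆ s : {s : Set E // MeasurableSet s},
        MeasurableSpace.comap (fun p : Measure E × E => (p.1 s, p.2)) inferInstance := by
  have : Nonempty {s : Set E // MeasurableSet s} := ⟨⟨∅, .empty⟩⟩
  change _ = ⨆ s : {s : Set E // MeasurableSet s},
    MeasurableSpace.comap (fun p : Measure E × E => (p.1 s, p.2)) (MeasurableSpace.prod _ _)
  simp_rw [MeasurableSpace.comap_prodMk, ← iSup_sup]
  change MeasurableSpace.comap Prod.fst (⨆ (s : Set E) (_ : MeasurableSet s),
    (borel ℝ≥0∞).comap fun μ : Measure E => μ s) ⊔ _ = _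
  simp_rw [MeasurableSpace.comap_iSup, MeasurableSpace.comap_comp, iSup_subtype']
  rfl

theorem exists_eq_stronglyMeasurable_comp_eval {Z : Type*} [TopologicalSpace Z]
    [TopologicalSpace.IsCompletelyMetrizableSpace Z] [Nonempty Z] {φ : Measure E × E → Z}
    (hφ : StronglyMeasurable φ) :
    ∃ (t : ℕ → {s : Set E // MeasurableSet s}) (Φ : (ℕ → ℝ≥0∞) × E → Z),
      StronglyMeasurable Φ ∧ φ = Φ ∘ fun p => (fun i => p.1 (t i), p.2) := by
  replace hφ : StronglyMeasurable[⨆ s : {s : Set E // MeasurableSet s},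
      MeasurableSpace.comap (fun p : Measure E × E => (p.1 s, p.2)) inferInstance] φ := by
    rwa [← measurableSpace_prod_eq_iSup]
  obtain ⟨c, hc, hφc⟩ := hφ.exists_countable_biSup
  obtain ⟨t, ht⟩ := (hc.insert ⟨∅, .empty⟩).exists_eq_range (Set.insert_nonempty _ _)
  refine ⟨t, (hφc.mono (iSup₂_le fun s hs => ?_)).exists_eq_measurable_comp⟩
  obtain ⟨i, rfl⟩ : s ∈ Set.range t := ht ▸ Set.mem_insert_of_mem _ hs
  have hi : Measurable fun y : (ℕ → ℝ≥0∞) × E => (y.1 i, y.2) :=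
    ((measurable_pi_apply i).comp measurable_fst).prodMk measurable_snd
  exact (MeasurableSpace.comap_mono hi.comap_le).trans_eq' MeasurableSpace.comap_comp

end MeasureTheory.Measure

section RemovePoint

variable {E : Type*} [MeasurableSpace E]

theorem rmPt_of_dirac_le {η : Measure E} {x : E} (h : Measure.dirac x ≤ η) :
    rmPt η x = η - Measure.dirac x := by
  rw [rmPt, if_pos h]

theorem rmPt_of_not_dirac_le {η : Measure E} {x : E} (h : ¬ Measure.dirac x ≤ η) :
    rmPt η x = η := by
  rw [rmPt, if_neg h]

theorem le_rmPt_add_dirac (η : Measure E) (x : E) :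
    η ≤ rmPt η x + Measure.dirac x := by
  by_cases h : Measure.dirac x ≤ η
  · rw [rmPt_of_dirac_le h, Measure.sub_add_cancel_of_le h]
  · rw [rmPt_of_not_dirac_le h]
    exact Measure.le_add_right le_rfl

theorem measurable_add_dirac_prod :
    Measurable fun p : Measure E × E => (p.1 + Measure.dirac p.2, p.2) :=
  (measurable_fst.add (Measure.measurable_dirac.comp measurable_snd)).prodMk measurable_snd

theorem exists_stronglyMeasurable_eq_comp_rmPt {Z : Type*} [TopologicalSpace Z]
    [TopologicalSpace.IsCompletelyMetrizableSpace Z] [Nonempty Z] {f : Measure E → E → Z}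
    (hf : StronglyMeasurable (uncurry f)) :
    ∃ Ψ : Measure E × E → Z, StronglyMeasurable Ψ ∧
      (∀ η x, Ψ (η + Measure.dirac x, x) = f η x) ∧
      ∀ η x, Measure.dirac x ≤ η → Ψ (η, x) = f (rmPt η x) x := by
  obtain ⟨t, Φ, hΦ, hfΦ⟩ := Measure.exists_eq_stronglyMeasurable_comp_eval hf
  have hf_eq (η : Measure E) (x : E) : f η x = Φ (fun i => η (t i), x) := congrFun hfΦ (η, x)
  refine ⟨fun p => Φ (fun i => p.1 (t i) - (t i : Set E).indicator 1 p.2, p.2), ?_, ?_, ?_⟩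
  · refine hΦ.comp_measurable ((measurable_pi_lambda _ fun i => ?_).prodMk measurable_snd)
    exact ((Measure.measurable_coe (t i).2).comp measurable_fst).sub
      ((measurable_one.indicator (t i).2).comp measurable_snd)
  · intro η x
    refine (congrArg (fun v => Φ (v, x)) (funext fun i => ?_)).trans (hf_eq η x).symm
    rw [Measure.add_apply, Measure.dirac_apply' x (t i).2]
    exact ENNReal.add_sub_cancel_right (by by_cases hx : x ∈ (t i : Set E) <;> simp [hx])
  · intro η x hx
    simp_rw [hf_eq, rmPt_of_dirac_le hx, Measure.sub_apply (t _).2 hx,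
      Measure.dirac_apply' x (t _).2]

end RemovePoint

theorem ProbabilityTheory.Kernel.isSFiniteKernel_of_isFiniteMeasure {α β : Type*}
    {_ : MeasurableSpace α} {_ : MeasurableSpace β} (κ : Kernel α β)
    (hκ : ∀ a, IsFiniteMeasure (κ a)) : IsSFiniteKernel κ := by
  classical
  let n : α → ℕ := fun a => ⌈(κ a Set.univ).toReal⌉₊
  have hn : Measurable n := (κ.measurable_coe .univ).ennreal_toReal.nat_ceil
  have hκn (a : α) : κ a Set.univ ≤ n a := by
    rw [← ENNReal.ofReal_toReal (measure_ne_top _ _), ← ENNReal.ofReal_natCast]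
    exact ENNReal.ofReal_le_ofReal (Nat.le_ceil _)
  let κs : ℕ → Kernel α β := fun m => piecewise (hn (measurableSet_singleton m)) κ 0
  have hκs (m : ℕ) : IsFiniteKernel (κs m) := ⟨⟨m, ENNReal.natCast_lt_top m, fun a => by
    simp only [κs, piecewise_apply]
    split_ifs with h
    · exact h ▸ hκn a
    · simp⟩⟩
  refine ⟨⟨κs, hκs, ?_⟩⟩
  ext a t ht
  simp_rw [sum_apply' _ _ ht, κs, piecewise_apply', Set.mem_preimage, Set.mem_singleton_iff]
  simp

section Mecke

variable {Ω E : Type*} [MeasurableSpace Ω] [MeasurableSpace E] {P : Measure Ω} {μ : Measure E}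
  {N : Ω → Measure E}

namespace MeckeAdd

theorem lintegral_apply (hMA : MeckeAdd P μ N) {s : Set E} (hs : MeasurableSet s) :
    ∫⁻ ω, N ω s ∂P = μ s * P Set.univ := by
  simpa only [lintegral_indicator_one hs, lintegral_const] using
    hMA (fun _ => s.indicator 1) ((measurable_one.indicator hs).comp measurable_snd)

theorem ae_lt_top [IsFiniteMeasure P] (hMA : MeckeAdd P μ N) (hN : Measurable N) {s : Set E}
    (hs : MeasurableSet s) (hμs : μ s ≠ ∞) : ∀ᵐ ω ∂P, N ω s < ∞ :=
  MeasureTheory.ae_lt_top ((Measure.measurable_coe hs).comp hN)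
    (by rw [hMA.lintegral_apply hs]; exact ENNReal.mul_ne_top hμs (measure_ne_top P _))

theorem ae_add_dirac_mem [SFinite μ] (hMA : MeckeAdd P μ N) (hN : Measurable N)
    {A : Set (Measure E)} (hA : MeasurableSet A) (h : ∀ᵐ ω ∂P, N ω ∈ A) :
    ∀ᵐ p ∂(P.prod μ), N p.1 + Measure.dirac p.2 ∈ A := by
  have hS : Measurable fun p : Ω × E => N p.1 + Measure.dirac p.2 :=
    (hN.comp measurable_fst).add (Measure.measurable_dirac.comp measurable_snd)
  have hAc : Measurable (Aᶜ.indicator (1 : Measure E → ℝ≥0∞)) := measurable_one.indicator hA.compl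
  have h0 : ∫⁻ p, Aᶜ.indicator 1 (N p.1 + Measure.dirac p.2) ∂(P.prod μ) = 0 := by
    rw [lintegral_prod (fun p : Ω × E => Aᶜ.indicator 1 (N p.1 + Measure.dirac p.2))
        (hAc.comp hS).aemeasurable,
      ← hMA (fun η _ => Aᶜ.indicator 1 η) (hAc.comp measurable_fst)]
    refine (lintegral_congr_ae (h.mono fun ω hω => ?_)).trans lintegral_zero
    simp [hω]
  filter_upwards [(lintegral_eq_zero_iff (hAc.comp hS)).1 h0] with p hp
  simpa using hp

theorem exists_isSFiniteKernel_ae_eq [IsFiniteMeasure P] [SigmaFinite μ]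
    (hMA : MeckeAdd P μ N) (hN : Measurable N) :
    ∃ κ : Kernel Ω E, IsSFiniteKernel κ ∧ ∀ᵐ ω ∂P, κ ω = N ω := by
  classical
  let d := disjointed (spanningSets μ)
  have hd (n : ℕ) : MeasurableSet (d n) :=
    MeasurableSet.disjointed (measurableSet_spanningSets μ) n
  have hfin (n : ℕ) : MeasurableSet {ω | N ω (d n) < ∞} :=
    measurableSet_lt ((Measure.measurable_coe (hd n)).comp hN) measurable_const
  let κs (n : ℕ) : Kernel Ω E := Kernel.piecewise (hfin n) (Kernel.restrict ⟨N, hN⟩ (hd n)) 0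
  have hκs (n : ℕ) : IsSFiniteKernel (κs n) := by
    refine Kernel.isSFiniteKernel_of_isFiniteMeasure _ fun ω => ⟨?_⟩
    simp only [κs, Kernel.piecewise_apply]
    split_ifs with h
    · simpa [Kernel.restrict_apply] using h
    · simp
  refine ⟨Kernel.sum κs, inferInstance, ?_⟩
  filter_upwards [ae_all_iff.2 fun n => hMA.ae_lt_top hN (hd n)
    ((measure_mono (disjointed_subset _ n)).trans_lt (measure_spanningSets_lt_top μ n)).ne]
    with ω hω
  simp only [Kernel.sum_apply, κs, Kernel.piecewise_apply, Set.mem_ofPred_eq, hω, if_true,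
    Kernel.restrict_apply, Kernel.coe_mk]
  exact sum_restrict_disjointed_spanningSets (N ω) μ

theorem map_compProd_eq [SFinite P] [SFinite μ] (hMA : MeckeAdd P μ N) (hN : Measurable N)
    {κ : Kernel Ω E} [IsSFiniteKernel κ] (hκ : ∀ᵐ ω ∂P, κ ω = N ω) :
    (P ⊗ₘ κ).map (fun p => (N p.1, p.2))
      = (P.prod μ).map (fun p => (N p.1 + Measure.dirac p.2, p.2)) := by
  have hT : Measurable fun p : Ω × E => (N p.1, p.2) :=
    (hN.comp measurable_fst).prodMk measurable_snd
  have hS : Measurable fun p : Ω × E => (N p.1 + Measure.dirac p.2, p.2) :=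
    (measurable_add_dirac_prod.comp hT :)
  refine Measure.ext_of_lintegral _ fun φ hφ => ?_
  rw [lintegral_map hφ hT, lintegral_map hφ hS,
    Measure.lintegral_compProd (f := fun p => φ (N p.1, p.2)) (hφ.comp hT),
    lintegral_prod (fun p => φ (N p.1 + Measure.dirac p.2, p.2)) (hφ.comp hS).aemeasurable]
  exact (lintegral_congr_ae (hκ.mono fun ω h => by rw [h]; rfl)).trans (hMA (curry φ) hφ)

section Integral

variable {G : Type*} [NormedAddCommGroup G] {φ : Measure E × E → G}

theorem integrable_compProd [SFinite P] [SFinite μ] (hMA : MeckeAdd P μ N) (hN : Measurable N)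
    {κ : Kernel Ω E} [IsSFiniteKernel κ] (hκ : ∀ᵐ ω ∂P, κ ω = N ω) (hφ : StronglyMeasurable φ)
    (hint : Integrable (fun p : Ω × E => φ (N p.1 + Measure.dirac p.2, p.2)) (P.prod μ)) :
    Integrable (fun p => φ (N p.1, p.2)) (P ⊗ₘ κ) := by
  have hT : Measurable fun p : Ω × E => (N p.1, p.2) :=
    (hN.comp measurable_fst).prodMk measurable_snd
  have hS : Measurable fun p : Ω × E => (N p.1 + Measure.dirac p.2, p.2) :=
    (measurable_add_dirac_prod.comp hT :)
  have h := (integrable_map_measure hφ.aestronglyMeasurable hS.aemeasurable).2 hint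
  rw [← hMA.map_compProd_eq hN hκ] at h
  exact (integrable_map_measure hφ.aestronglyMeasurable hT.aemeasurable).1 h

variable [IsFiniteMeasure P] [SigmaFinite μ]

theorem ae_integrable (hMA : MeckeAdd P μ N) (hN : Measurable N) (hφ : StronglyMeasurable φ)
    (hint : Integrable (fun p : Ω × E => φ (N p.1 + Measure.dirac p.2, p.2)) (P.prod μ)) :
    ∀ᵐ ω ∂P, Integrable (fun x => φ (N ω, x)) (N ω) := by
  obtain ⟨κ, _, hκ⟩ := hMA.exists_isSFiniteKernel_ae_eq hN
  have h := hMA.integrable_compProd hN hκ hφ hint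
  filter_upwards [((Measure.integrable_compProd_iff h.1).1 h).1, hκ] with ω hω hκω
  exact hκω ▸ hω

theorem integrable_integral [NormedSpace ℝ G] (hMA : MeckeAdd P μ N) (hN : Measurable N)
    (hφ : StronglyMeasurable φ)
    (hint : Integrable (fun p : Ω × E => φ (N p.1 + Measure.dirac p.2, p.2)) (P.prod μ)) :
    Integrable (fun ω => ∫ x, φ (N ω, x) ∂(N ω)) P := by
  obtain ⟨κ, _, hκ⟩ := hMA.exists_isSFiniteKernel_ae_eq hN
  refine (hMA.integrable_compProd hN hκ hφ hint).integral_compProd.congr ?_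
  filter_upwards [hκ] with ω hκω
  rw [Kernel.prodMkLeft_apply, hκω]

theorem integral_integral_eq [NormedSpace ℝ G] (hMA : MeckeAdd P μ N) (hN : Measurable N)
    (hφ : StronglyMeasurable φ)
    (hint : Integrable (fun p : Ω × E => φ (N p.1 + Measure.dirac p.2, p.2)) (P.prod μ)) :
    ∫ ω, ∫ x, φ (N ω, x) ∂(N ω) ∂P = ∫ p, φ (N p.1 + Measure.dirac p.2, p.2) ∂(P.prod μ) := by
  obtain ⟨κ, _, hκ⟩ := hMA.exists_isSFiniteKernel_ae_eq hN
  have hT : Measurable fun p : Ω × E => (N p.1, p.2) :=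
    (hN.comp measurable_fst).prodMk measurable_snd
  have hS : Measurable fun p : Ω × E => (N p.1 + Measure.dirac p.2, p.2) :=
    (measurable_add_dirac_prod.comp hT :)
  calc ∫ ω, ∫ x, φ (N ω, x) ∂(N ω) ∂P = ∫ ω, ∫ x, φ (N ω, x) ∂(κ ω) ∂P :=
        integral_congr_ae (hκ.mono fun ω h => by simp only [h])
    _ = ∫ p, φ (N p.1, p.2) ∂(P ⊗ₘ κ) :=
        (Measure.integral_compProd (hMA.integrable_compProd hN hκ hφ hint)).symm
    _ = ∫ q, φ q ∂((P ⊗ₘ κ).map fun p => (N p.1, p.2)) :=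
        (integral_map hT.aemeasurable hφ.aestronglyMeasurable).symm
    _ = ∫ p, φ (N p.1 + Measure.dirac p.2, p.2) ∂(P.prod μ) := by
        rw [hMA.map_compProd_eq hN hκ, integral_map hS.aemeasurable hφ.aestronglyMeasurable]

end Integral

end MeckeAdd

theorem MeckeSub.ae_ae_dirac_le_of_mem [IsFiniteMeasure P] (hMS : MeckeSub P μ N)
    (hMA : MeckeAdd P μ N) (hN : Measurable N) {s : Set E} (hs : MeasurableSet s)
    (hμs : μ s ≠ ∞) : ∀ᵐ ω ∂P, ∀ᵐ x ∂(N ω), x ∈ s → Measure.dirac x ≤ N ω := by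
  -- `a η x` drops strictly when a point of `s` is added to `η` with `η s < ∞`, while the two
  -- Mecke formulas give `a (rmPt η x + δ_x) x` and `a η x` the same `N`-integral.
  let a : Measure E → E → ℝ≥0∞ := fun η => s.indicator fun _ => (1 + η s)⁻¹
  have ha : Measurable (uncurry a) :=
    (((Measure.measurable_coe hs).const_add 1).inv.comp measurable_fst).indicator
      (measurable_snd hs)
  have ha_anti {η η' : Measure E} (h : η ≤ η') (x : E) : a η' x ≤ a η x := by
    by_cases hx : x ∈ s
    · simpa [a, hx] using add_le_add_right (h s) 1
    · simp [a, hx]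
  have hW (η : Measure E) : ∫⁻ x, a η x ∂η = (1 + η s)⁻¹ * η s := lintegral_indicator_const hs _
  have hW_le (η : Measure E) : (1 + η s)⁻¹ * η s ≤ η s :=
    mul_le_of_le_one_left' (ENNReal.inv_le_one.2 le_self_add)
  have ha_shift : Measurable fun p : Measure E × E => a (p.1 + Measure.dirac p.2) p.2 :=
    (ha.comp measurable_add_dirac_prod :)
  have h_eq : ∫⁻ ω, ∫⁻ x, a (rmPt (N ω) x + Measure.dirac x) x ∂(N ω) ∂P
      = ∫⁻ ω, ∫⁻ x, a (N ω) x ∂(N ω) ∂P :=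
    (hMS (fun η x => a (η + Measure.dirac x) x) ha_shift).trans (hMA _ ha).symm
  have h_fin : ∫⁻ ω, ∫⁻ x, a (N ω) x ∂(N ω) ∂P ≠ ∞ := by
    refine ne_top_of_le_ne_top ?_ (lintegral_mono fun ω => (hW (N ω)).trans_le (hW_le (N ω)))
    rw [hMA.lintegral_apply hs]
    exact ENNReal.mul_ne_top hμs (measure_ne_top P _)
  have h_outer : ∀ᵐ ω ∂P, ∫⁻ x, a (rmPt (N ω) x + Measure.dirac x) x ∂(N ω)
      = ∫⁻ x, a (N ω) x ∂(N ω) := by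
    refine ae_eq_of_ae_le_of_lintegral_le (ae_of_all _ fun ω => lintegral_mono fun x =>
      ha_anti (le_rmPt_add_dirac _ x) x) (h_eq ▸ h_fin) ?_ h_eq.ge
    simp_rw [hW]
    exact (((Measure.measurable_coe hs).comp hN).const_add 1).inv.mul
      ((Measure.measurable_coe hs).comp hN) |>.aemeasurable
  filter_upwards [h_outer, hMA.ae_lt_top hN hs hμs] with ω hω hNω
  have h_inner : (fun x => a (rmPt (N ω) x + Measure.dirac x) x) =ᵐ[N ω] a (N ω) :=
    ae_eq_of_ae_le_of_lintegral_le (ae_of_all _ fun x => ha_anti (le_rmPt_add_dirac _ x) x)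
      (hω ▸ hW (N ω) ▸ (ENNReal.mul_lt_top (ENNReal.inv_lt_top.2 (by simp)) hNω).ne)
      (ha.comp (measurable_const.prodMk measurable_id)).aemeasurable hω.ge
  filter_upwards [h_inner] with x hx hxs
  by_contra hbad
  rw [rmPt_of_not_dirac_le hbad] at hx
  simp only [a, Set.indicator_of_mem hxs, Measure.add_apply, Measure.dirac_apply' _ hs,
    Pi.one_apply, inv_inj, ENNReal.add_right_inj ENNReal.one_ne_top] at hx
  exact (ENNReal.lt_add_right hNω.ne one_ne_zero).ne' hx

theorem MeckeSub.ae_ae_dirac_le [IsFiniteMeasure P] [SigmaFinite μ] (hMS : MeckeSub P μ N)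
    (hMA : MeckeAdd P μ N) (hN : Measurable N) :
    ∀ᵐ ω ∂P, ∀ᵐ x ∂(N ω), Measure.dirac x ≤ N ω := by
  filter_upwards [ae_all_iff.2 fun n => hMS.ae_ae_dirac_le_of_mem hMA hN
    (measurableSet_spanningSets μ n) (measure_spanningSets_lt_top μ n).ne] with ω hω
  filter_upwards [ae_all_iff.2 hω] with x hx
  obtain ⟨n, hn⟩ := Set.mem_iUnion.1 (iUnion_spanningSets μ ▸ Set.mem_univ x)
  exact hx n hn

end Mecke

theorem MeasureTheory.Integrable.inner_of_ae_norm_le {α H : Type*} [MeasurableSpace α]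
    {μ : Measure α} [NormedAddCommGroup H] [InnerProductSpace ℝ H] {a b : α → H} {K : ℝ}
    (hb : Integrable b μ) (ha : AEStronglyMeasurable a μ) (hK : ∀ᵐ x ∂μ, ‖a x‖ ≤ K) :
    Integrable (fun x => ⟪a x, b x⟫) μ := by
  refine (hb.norm.const_mul K).mono' (ha.inner hb.1) ?_
  filter_upwards [hK] with x hx
  exact (norm_inner_le_norm _ _).trans (mul_le_mul_of_nonneg_right hx (norm_nonneg _))

theorem integral_inner_pathDelta {Ω E H : Type*} [MeasurableSpace Ω] [MeasurableSpace E]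
    [NormedAddCommGroup H] [InnerProductSpace ℝ H] [CompleteSpace H]
    {P : Measure Ω} [IsFiniteMeasure P] {μ : Measure E} [SigmaFinite μ] {N : Ω → Measure E}
    (hMA : MeckeAdd P μ N) (hMS : MeckeSub P μ N) (hN : Measurable N)
    {f : Measure E → E → H} (hf : StronglyMeasurable (uncurry f))
    (hint : Integrable (fun p : Ω × E => f (N p.1) p.2) (P.prod μ))
    {g : Measure E → H} (hg : StronglyMeasurable g) {K : ℝ} (hK : ∀ᵐ ω ∂P, ‖g (N ω)‖ ≤ K) :
    ∫ ω, ⟪g (N ω), pathDelta μ f (N ω)⟫ ∂P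
      = ∫ p, ⟪g (N p.1 + Measure.dirac p.2) - g (N p.1), f (N p.1) p.2⟫ ∂(P.prod μ) := by
  obtain ⟨Ψ, hΨ, hΨ_add, hΨ_rmPt⟩ := exists_stronglyMeasurable_eq_comp_rmPt hf
  have hN_fst : Measurable fun p : Ω × E => N p.1 := hN.comp measurable_fst
  have hN_add : Measurable fun p : Ω × E => N p.1 + Measure.dirac p.2 :=
    hN_fst.add (Measure.measurable_dirac.comp measurable_snd)
  have hφ : StronglyMeasurable fun q : Measure E × E => ⟪g q.1, Ψ q⟫ :=
    (hg.comp_measurable measurable_fst).inner hΨ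
  have hΨ_int : Integrable (fun p : Ω × E => Ψ (N p.1 + Measure.dirac p.2, p.2)) (P.prod μ) := by
    simpa only [hΨ_add] using hint
  have h_add_int : Integrable
      (fun p : Ω × E => ⟪g (N p.1 + Measure.dirac p.2), f (N p.1) p.2⟫) (P.prod μ) :=
    hint.inner_of_ae_norm_le (hg.comp_measurable hN_add).aestronglyMeasurable
      (hMA.ae_add_dirac_mem hN (measurableSet_le hg.norm.measurable measurable_const) hK)
  have hφ_int : Integrable (fun p : Ω × E =>
      ⟪g (N p.1 + Measure.dirac p.2), Ψ (N p.1 + Measure.dirac p.2, p.2)⟫) (P.prod μ) := by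
    simpa only [hΨ_add] using h_add_int
  have h_int : Integrable (fun p : Ω × E => ⟪g (N p.1), f (N p.1) p.2⟫) (P.prod μ) :=
    hint.inner_of_ae_norm_le (hg.comp_measurable hN_fst).aestronglyMeasurable
      (Measure.quasiMeasurePreserving_fst.ae hK)
  have h_pointwise : ∀ᵐ ω ∂P, ⟪g (N ω), pathDelta μ f (N ω)⟫
      = ∫ x, ⟪g (N ω), Ψ (N ω, x)⟫ ∂(N ω) - ∫ x, ⟪g (N ω), f (N ω) x⟫ ∂μ := by
    filter_upwards [hMS.ae_ae_dirac_le hMA hN, hMA.ae_integrable hN hΨ hΨ_int,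
      hint.prod_right_ae] with ω hω hΨω hfω
    have h_rmPt : ∫ x, f (rmPt (N ω) x) x ∂(N ω) = ∫ x, Ψ (N ω, x) ∂(N ω) :=
      integral_congr_ae (hω.mono fun x hx => (hΨ_rmPt _ x hx).symm)
    rw [pathDelta, inner_sub_right, h_rmPt, integral_inner hΨω, integral_inner hfω]
  calc ∫ ω, ⟪g (N ω), pathDelta μ f (N ω)⟫ ∂P
      = ∫ ω, ∫ x, ⟪g (N ω), Ψ (N ω, x)⟫ ∂(N ω) ∂P
          - ∫ ω, ∫ x, ⟪g (N ω), f (N ω) x⟫ ∂μ ∂P := by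
        rw [integral_congr_ae h_pointwise,
          integral_sub (hMA.integrable_integral hN hφ hφ_int) h_int.integral_prod_left]
    _ = ∫ p, ⟪g (N p.1 + Measure.dirac p.2), f (N p.1) p.2⟫ ∂(P.prod μ)
          - ∫ p, ⟪g (N p.1), f (N p.1) p.2⟫ ∂(P.prod μ) := by
        rw [hMA.integral_integral_eq hN hφ hφ_int, integral_prod _ h_int]
        simp only [hΨ_add]
    _ = _ := by
        rw [← integral_sub h_add_int h_int]
        simp only [inner_sub_left]

theorem L1_Linfty_duality_general
    {Ω E H : Type*} [MeasurableSpace Ω] [MeasurableSpace E]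
    [NormedAddCommGroup H] [InnerProductSpace ℝ H] [CompleteSpace H]
    (P : Measure Ω) [IsProbabilityMeasure P] (μ : Measure E) [SigmaFinite μ]
    (N : Ω → Measure E) (hMA : MeckeAdd P μ N) (hMS : MeckeSub P μ N)
    (hN : Measurable N)
    (f : Measure E → E → H) (hf : StronglyMeasurable (Function.uncurry f))
    (hint : Integrable (fun pr : Ω × E => f (N pr.1) pr.2) (P.prod μ))
    (F : Ω → H) (g : Measure E → H) (hg : StronglyMeasurable g)
    (hF : ∀ᵐ ω ∂P, F ω = g (N ω)) (hFb : MemLp F ∞ P) :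
    ∫ ω, ⟪F ω, pathDelta μ f (N ω)⟫ ∂P
      = ∫ pr, ⟪g (N pr.1 + Measure.dirac pr.2) - F pr.1, f (N pr.1) pr.2⟫ ∂(P.prod μ) := by
  have hgK : ∀ᵐ ω ∂P, ‖g (N ω)‖ ≤ lpNorm F ∞ P := by
    filter_upwards [ae_le_lpNorm_exponent_top hFb, hF] with ω hω hFω
    rwa [← hFω]
  calc ∫ ω, ⟪F ω, pathDelta μ f (N ω)⟫ ∂P = ∫ ω, ⟪g (N ω), pathDelta μ f (N ω)⟫ ∂P :=
        integral_congr_ae (hF.mono fun ω h => by simp only [h])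
    _ = ∫ pr, ⟪g (N pr.1 + Measure.dirac pr.2) - g (N pr.1), f (N pr.1) pr.2⟫ ∂(P.prod μ) :=
        integral_inner_pathDelta hMA hMS hN hf hint hg hgK
    _ = _ := integral_congr_ae
        ((Measure.quasiMeasurePreserving_fst.ae hF).mono fun pr h => by simp only [h])

/-- **`L¹`-`L^∞` duality**: for `F ∈ L^∞(Ω;H)` (representative `g`) and
`Φ ∈ L¹(Ω × E;H)` (representative `f`),
`𝔼⟪F, δ(Φ)⟫ = 𝔼 ∫_E ⟪D_x F, Φ(x)⟫ μ(dx)` with `D_x F = g (N + δ_x) - F`. -/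
theorem L1_Linfty_duality
    {Ω E H : Type*} [MeasurableSpace Ω] [MeasurableSpace E]
    [NormedAddCommGroup H] [InnerProductSpace ℝ H] [CompleteSpace H]
    [TopologicalSpace.SeparableSpace H]
    (P : Measure Ω) [IsProbabilityMeasure P] (μ : Measure E) [SigmaFinite μ]
    (N : Ω → Measure E) (hMA : MeckeAdd P μ N) (hMS : MeckeSub P μ N)
    (hN : Measurable N)
    (f : Measure E → E → H) (hf : StronglyMeasurable (Function.uncurry f))
    (hint : Integrable (fun pr : Ω × E => f (N pr.1) pr.2) (P.prod μ))
    (F : Ω → H) (g : Measure E → H) (hg : StronglyMeasurable g)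
    (hF : ∀ᵐ ω ∂P, F ω = g (N ω)) (hFb : MemLp F ∞ P) :
    ∫ ω, ⟪F ω, pathDelta μ f (N ω)⟫ ∂P
      = ∫ pr, ⟪g (N pr.1 + Measure.dirac pr.2) - F pr.1, f (N pr.1) pr.2⟫ ∂(P.prod μ) :=
  L1_Linfty_duality_general P μ N hMA hMS hN f hf hint F g hg hF hFb
end

section
/- (Predictable integrands: $N$-integral equals pathwise integral.) In the space-time setting $E = [0,T]\times U$ with intensity $\lambda\otimes\nu$, for every predictable $\Phi \in L^1_{\mathrm{pr}}(\Omega_T\times U;H)$ one has $\int_0^T\int_U \varepsilon^-_{t,x}\Phi(t,x)\,N(dt,dx) = \int_0^T\int_U \Phi(t,x)\,N(dt,dx)$ in $L^1(\Omega;H)$, i.e. the pathwise Mecke-type integral of the previsible modification coincides with the Itô-type $L^1$ stochastic integral with respect to $N$. -/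
open MeasureTheory Filter
open scoped ENNReal RealInnerProductSpace

/-- The σ-algebra on `Ω` generated by the restriction of the Poisson random
measure `N` to `[0, u] × U`. -/
noncomputable def filtRaw {Ω U : Type*} [MeasurableSpace Ω] [MeasurableSpace U]
    (N : Ω → Measure (ℝ × U)) (u : ℝ) : MeasurableSpace Ω :=
  MeasurableSpace.comap
    (fun ω => (N ω).restrict (Set.Iic u ×ˢ (Set.univ : Set U))) inferInstance

/-- The right-continuous filtration `ℱ_t = ⋂_{u > t} ℱ_{[0,u] × U}`
generated by the Poisson random measure `N`. -/
noncomputable def filt {Ω U : Type*} [MeasurableSpace Ω] [MeasurableSpace U]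
    (N : Ω → Measure (ℝ × U)) (t : ℝ) : MeasurableSpace Ω :=
  ⨅ u ∈ Set.Ioi t, filtRaw N u

/-- The predictable σ-algebra `𝒫_T` on `Ω × ℝ` associated to the filtration
`(ℱ_t)`: generated by `F_r × (r, t]` with `F_r ∈ ℱ_r` and `F_0 × {0}`. -/
def predSigma {Ω U : Type*} [MeasurableSpace Ω] [MeasurableSpace U]
    (N : Ω → Measure (ℝ × U)) : MeasurableSpace (Ω × ℝ) :=
  MeasurableSpace.generateFrom
    ({s | ∃ (r t : ℝ) (A : Set Ω), r ≤ t ∧ MeasurableSet[filt N r] A ∧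
        s = A ×ˢ Set.Ioc r t}
      ∪ {s | ∃ A : Set Ω, MeasurableSet[filt N 0] A ∧ s = A ×ˢ ({0} : Set ℝ)})

/-- The σ-algebra `𝒫_T ⊗ ℬ(U)` on `Ω × ([0,T] × U)` of predictable random fields. -/
def predProd {Ω U : Type*} [MeasurableSpace Ω] [MeasurableSpace U]
    (N : Ω → Measure (ℝ × U)) : MeasurableSpace (Ω × (ℝ × U)) :=
  MeasurableSpace.comap (fun p : Ω × (ℝ × U) => ((p.1, p.2.1), p.2.2))
    ((predSigma N).prod inferInstance)

/-
Doob–Dynkin factors a predictable `Φ` as `Φ(ω, x) = F(N ω, x)`, where `F` is measurable for the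
σ-algebra of sets invariant under `(η, x) ↦ (η \ δₓ, x)` at positive times: an event of `ℱ_r` is
determined by `N` on `[0, q] × U` for every rational `q > r`, which does not see an atom at a time
in `(q, t]`. Mecke's formula, tested against indicators of `{f = F}` on sets of finite intensity,
turns the `ℙ ⊗ μ`-a.e. identity `f(N ω, x) = F(N ω, x)` into `f(N ω \ δₓ, x) = F(N ω \ δₓ, x)`
for `N ω`-a.e. `x`, almost surely, and invariance of `F` gives `F(N ω \ δₓ, x) = Φ(ω, x)`.
-/

lemma rmPt_restrict_of_notMem {E : Type*} [MeasurableSpace E] (η : Measure E) {x : E}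
    {S : Set E} (hS : MeasurableSet S) (hx : x ∉ S) :
    (rmPt η x).restrict S = η.restrict S := by
  unfold rmPt
  split_ifs with h
  · ext s hs
    rw [Measure.restrict_apply hs, Measure.restrict_apply hs,
      Measure.sub_apply (hs.inter hS) h, Measure.dirac_apply' _ (hs.inter hS),
      Set.indicator_of_notMem (fun hmem => hx hmem.2), tsub_zero]
  · rfl

lemma MeasureTheory.Measure.measurable_restrict_left {α : Type*} [MeasurableSpace α] {S : Set α}
    (hS : MeasurableSet S) : Measurable fun μ : Measure α => μ.restrict S :=
  Measure.measurable_of_measurable_coe _ fun s hs => by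
    simpa only [Measure.restrict_apply hs] using Measure.measurable_coe (hs.inter hS)

lemma MeasureTheory.StronglyMeasurable.comp_eq_of_invariants {α β : Type*} [MeasurableSpace α]
    [TopologicalSpace β] [TopologicalSpace.PseudoMetrizableSpace β] [T1Space β] {f : α → α}
    {g : α → β} (hg : StronglyMeasurable[MeasurableSpace.invariants f] g) : g ∘ f = g := by
  borelize β
  exact MeasurableSpace.comp_eq_of_measurable_invariants hg.measurable

namespace MeckeSub

variable {Ω E : Type*} [MeasurableSpace Ω] [MeasurableSpace E]
  {P : Measure Ω} {μ : Measure E} {N : Ω → Measure E}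

lemma lintegral_apply (hMS : MeckeSub P μ N) {S : Set E} (hS : MeasurableSet S) :
    ∫⁻ ω, N ω S ∂P = μ S * P Set.univ := by
  simpa [lintegral_indicator_one hS] using
    hMS (fun _ x => S.indicator 1 x) ((measurable_one.indicator hS).comp measurable_snd)

lemma ae_ae_rmPt_mem_on_of_measure_ne_top [IsFiniteMeasure P] (hMS : MeckeSub P μ N)
    (hN : Measurable N) {B : Set (Measure E × E)} (hB : MeasurableSet B) {S : Set E} (hS : MeasurableSet S)
    (hμS : μ S ≠ ∞) (h : ∀ᵐ ω ∂P, ∀ᵐ x ∂μ, (N ω, x) ∈ B) :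
    ∀ᵐ ω ∂P, ∀ᵐ x ∂(N ω), x ∈ S → (rmPt (N ω) x, x) ∈ B := by
  set g : Measure E → E → ℝ≥0∞ := fun η x => (B ∩ Prod.snd ⁻¹' S).indicator 1 (η, x)
  have hg : Measurable (Function.uncurry g) :=
    measurable_one.indicator (hB.inter (measurable_snd hS))
  have hg_le : ∀ η x, g η x ≤ S.indicator 1 x := fun η x =>
    Set.indicator_le_indicator_of_subset Set.inter_subset_right (fun _ => zero_le) (η, x)
  have hg_eq : ∀ η x, (η, x) ∈ B → g η x = S.indicator 1 x := by
    intro η x hx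
    by_cases hxS : x ∈ S <;> simp [g, hx, hxS]
  have hNS : Measurable fun ω => N ω S := (Measure.measurable_coe hS).comp hN
  have hrhs : ∫⁻ ω, ∫⁻ x, g (N ω) x ∂μ ∂P = μ S * P Set.univ := by
    rw [← lintegral_const]
    refine lintegral_congr_ae (h.mono fun ω hω => ?_)
    rw [← lintegral_indicator_one hS]
    exact lintegral_congr_ae (hω.mono fun x hx => hg_eq _ _ hx)
  have hfin : μ S * P Set.univ ≠ ∞ := ENNReal.mul_ne_top hμS (measure_ne_top P _)
  -- By Mecke both sides have the same finite `P`-integral, and `≤` holds pointwise.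
  have hcount : ∀ᵐ ω ∂P, ∫⁻ x, g (rmPt (N ω) x) x ∂(N ω) = N ω S := by
    refine ae_eq_of_ae_le_of_lintegral_le (ae_of_all _ fun ω => ?_)
      (by rwa [hMS g hg, hrhs]) hNS.aemeasurable (by rw [hMS g hg, hrhs, lintegral_apply hMS hS])
    exact (lintegral_mono fun x => hg_le _ x).trans_eq (lintegral_indicator_one hS)
  have hNS_fin : ∀ᵐ ω ∂P, N ω S < ∞ := ae_lt_top hNS (by rwa [lintegral_apply hMS hS])
  filter_upwards [hcount, hNS_fin] with ω hω hω_fin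
  have hg_ae : ∀ᵐ x ∂(N ω), g (rmPt (N ω) x) x = S.indicator 1 x :=
    ae_eq_of_ae_le_of_lintegral_le (ae_of_all _ fun x => hg_le _ x) (by rw [hω]; exact hω_fin.ne)
      (measurable_one.indicator hS).aemeasurable (by rw [hω, lintegral_indicator_one hS])
  filter_upwards [hg_ae] with x hx hxS
  by_contra hxB
  simp [g, hxB, hxS] at hx

lemma ae_ae_rmPt_mem [IsFiniteMeasure P] [SigmaFinite μ] (hMS : MeckeSub P μ N)
    (hN : Measurable N) {B : Set (Measure E × E)} (hB : MeasurableSet B)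
    (h : ∀ᵐ ω ∂P, ∀ᵐ x ∂μ, (N ω, x) ∈ B) :
    ∀ᵐ ω ∂P, ∀ᵐ x ∂(N ω), (rmPt (N ω) x, x) ∈ B := by
  have h_spanning n := hMS.ae_ae_rmPt_mem_on_of_measure_ne_top hN hB
    (measurableSet_spanningSets μ n) (measure_spanningSets_lt_top μ n).ne h
  filter_upwards [ae_all_iff.2 h_spanning] with ω hω
  filter_upwards [ae_all_iff.2 hω] with x hx
  exact hx _ (mem_spanningSetsIndex μ x)

end MeckeSub

section Invariants

variable {U : Type*} [MeasurableSpace U]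

/-- Left alone at time `0`, since an `ℱ₀`-measurable event may depend on the atoms of `N` at
time `0`. -/
noncomputable def rmPtOffZero (p : Measure (ℝ × U) × (ℝ × U)) : Measure (ℝ × U) × (ℝ × U) :=
  if p.2.1 = 0 then p else (rmPt p.1 p.2, p.2)

local notation "𝒢" => MeasurableSpace.invariants (rmPtOffZero (U := U))

lemma measurableSet_invariants_restrict {S C : Set (ℝ × U)} {B : Set (Measure (ℝ × U))}
    (hS : MeasurableSet S) (hC : MeasurableSet C) (hB : MeasurableSet B) (hCS : Disjoint C S) :
    MeasurableSet[𝒢] {p | p.1.restrict S ∈ B ∧ p.2 ∈ C} := by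
  refine ⟨((Measure.measurable_restrict_left hS).comp measurable_fst hB).inter
    (measurable_snd hC), ?_⟩
  ext ⟨η, x⟩
  simp only [Set.mem_preimage, Set.mem_ofPred_eq, rmPtOffZero]
  split_ifs
  · rfl
  · by_cases hx : x ∈ C
    · rw [rmPt_restrict_of_notMem η hS (hCS.notMem_of_mem_left hx)]
    · simp [hx]

lemma measurableSet_invariants_time_zero {B : Set (Measure (ℝ × U))} (hB : MeasurableSet B) :
    MeasurableSet[𝒢] {p | p.1 ∈ B ∧ p.2.1 = 0} := by
  refine ⟨(measurable_fst hB).inter (measurable_snd.fst (measurableSet_singleton 0)), ?_⟩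
  ext ⟨η, x⟩
  by_cases hx : x.1 = 0 <;> simp [rmPtOffZero, hx]

lemma measurableSet_invariants_snd_preimage {C : Set (ℝ × U)} (hC : MeasurableSet C) :
    MeasurableSet[𝒢] (Prod.snd ⁻¹' C) := by
  refine ⟨measurable_snd hC, ?_⟩
  ext ⟨η, x⟩
  by_cases hx : x.1 = 0 <;> simp [rmPtOffZero, hx]

lemma predProd_le_comap_invariants {Ω : Type*} [MeasurableSpace Ω] (N : Ω → Measure (ℝ × U)) :
    predProd N ≤ MeasurableSpace.comap (fun p : Ω × (ℝ × U) => (N p.1, p.2)) 𝒢 := by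
  set Ψ : (Ω × ℝ) × U → Measure (ℝ × U) × (ℝ × U) := fun q => (N q.1.1, (q.1.2, q.2))
  change _ ≤ MeasurableSpace.comap (Ψ ∘ fun p : Ω × (ℝ × U) => ((p.1, p.2.1), p.2.2)) 𝒢
  rw [predProd, ← MeasurableSpace.comap_comp]
  refine MeasurableSpace.comap_mono (sup_le ?_ ?_)
  · rw [MeasurableSpace.comap_le_iff_le_map]
    refine MeasurableSpace.generateFrom_le ?_
    rintro s (⟨r, t, A, -, hA, rfl⟩ | ⟨A, hA, rfl⟩)
    · choose B hB hBA using fun q : {q : ℚ // r < q} =>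
        (iInf₂_le (q : ℝ) q.2 : filt N r ≤ filtRaw N q) A hA
      refine ⟨⋃ q, {p | p.1.restrict (Set.Iic (q : ℝ) ×ˢ Set.univ) ∈ B q ∧
          p.2 ∈ Set.Ioc (q : ℝ) t ×ˢ Set.univ}, MeasurableSet.iUnion fun q =>
        measurableSet_invariants_restrict (measurableSet_Iic.prod .univ)
          (measurableSet_Ioc.prod .univ) (hB q) ?_, ?_⟩
      · exact Set.disjoint_prod.2 (Or.inl (Set.disjoint_left.2 fun x hx hx' => not_le.2 hx.1 hx'))
      · ext ⟨⟨ω, s⟩, v⟩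
        have hBA' q : (N ω).restrict (Set.Iic (q : ℝ) ×ˢ Set.univ) ∈ B q ↔ ω ∈ A :=
          Set.ext_iff.1 (hBA q) ω
        simp only [Set.mem_preimage, Set.mem_iUnion, Set.mem_ofPred_eq, Set.mem_prod, hBA',
          Set.mem_Ioc, Set.mem_univ, and_true, Ψ]
        constructor
        · rintro ⟨q, hA, hqs, hst⟩
          exact ⟨hA, q.2.trans hqs, hst⟩
        · rintro ⟨hA, hrs, hst⟩
          obtain ⟨q, hrq, hqs⟩ := exists_rat_btwn hrs
          exact ⟨⟨q, hrq⟩, hA, hqs, hst⟩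
    · obtain ⟨B, hB, hBA⟩ := (iInf₂_le 1 zero_lt_one : filt N 0 ≤ filtRaw N 1) A hA
      refine ⟨_, measurableSet_invariants_time_zero
        (Measure.measurable_restrict_left ((measurableSet_Iic (a := 1)).prod .univ) hB), ?_⟩
      ext ⟨⟨ω, s⟩, v⟩
      simp [Ψ, ← hBA]
  · rintro s ⟨C, hC, rfl⟩
    exact ⟨Prod.snd ⁻¹' (Prod.snd ⁻¹' C), measurableSet_invariants_snd_preimage
      (measurable_snd hC), rfl⟩

end Invariants

theorem predictable_pathwise_eq_ito_N_general
    {Ω U H : Type*} [MeasurableSpace Ω] [MeasurableSpace U]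
    [NormedAddCommGroup H] [InnerProductSpace ℝ H] [CompleteSpace H]
    (P : Measure Ω) [IsProbabilityMeasure P]
    (T : ℝ) (ν : Measure U) [SigmaFinite ν]
    (μST : Measure (ℝ × U))
    (hμ : μST = ((volume : Measure ℝ).restrict (Set.Icc 0 T)).prod ν)
    (N : Ω → Measure (ℝ × U)) (hMS : MeckeSub P μST N) (hN : Measurable N)
    (Φ : Ω × (ℝ × U) → H) (hpred : StronglyMeasurable[predProd N] Φ)
    (f : Measure (ℝ × U) → (ℝ × U) → H)
    (hf : StronglyMeasurable (Function.uncurry f))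
    (hrep : ∀ᵐ pr ∂(P.prod μST), Φ pr = f (N pr.1) pr.2) :
    ∀ᵐ ω ∂P, ∫ x, f (rmPt (N ω) x) x ∂(N ω) = ∫ x, Φ (ω, x) ∂(N ω) := by
  subst hμ
  obtain ⟨F, hF, rfl⟩ :=
    (hpred.mono (predProd_le_comap_invariants N)).exists_eq_measurable_comp
      (mY := MeasurableSpace.invariants rmPtOffZero)
  have hF_inv : F ∘ rmPtOffZero = F := StronglyMeasurable.comp_eq_of_invariants hF
  set B := {p : Measure (ℝ × U) × (ℝ × U) | p.2.1 ≠ 0 ∧ f p.1 p.2 = F p}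
  have hB : MeasurableSet B :=
    (measurable_snd.fst (measurableSet_singleton 0).compl).inter
      (hf.measurableSet_eq_fun (hF.mono (MeasurableSpace.invariants_le _)))
  have hB_ae : ∀ᵐ ω ∂P, ∀ᵐ x ∂(volume.restrict (Set.Icc 0 T)).prod ν, (N ω, x) ∈ B := by
    filter_upwards [Measure.ae_ae_of_ae_prod hrep] with ω hω
    filter_upwards [hω, Measure.quasiMeasurePreserving_fst.ae (Measure.ae_ne _ 0)] with x hx hx0
    exact ⟨hx0, hx.symm⟩
  filter_upwards [hMS.ae_ae_rmPt_mem hN hB hB_ae] with ω hω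
  refine integral_congr_ae (hω.mono fun x ⟨hx0, hx⟩ => ?_)
  calc f (rmPt (N ω) x) x = F (rmPtOffZero (N ω, x)) := by rw [rmPtOffZero, if_neg hx0]; exact hx
    _ = F (N ω, x) := congrFun hF_inv _

/-- **Predictable integrands: pathwise Mecke-type integral = Itô-type
`N`-integral.**  In the space-time setting `E = [0,T] × U`, intensity `λ ⊗ ν`,
for every predictable `Φ ∈ L¹_{pr}(Ω_T × U;H)` (with representative `f`) the
pathwise integral of `ε⁻ Φ` w.r.t. `N` coincides a.s. (hence in `L¹(Ω;H)`) with
the pathwise integral of the predictable version `Φ` itself, which is the Itô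
`L¹`-integral `I^N_T(Φ)`. -/
theorem predictable_pathwise_eq_ito_N
    {Ω U H : Type*} [MeasurableSpace Ω] [MeasurableSpace U]
    [NormedAddCommGroup H] [InnerProductSpace ℝ H] [CompleteSpace H]
    [TopologicalSpace.SeparableSpace H]
    (P : Measure Ω) [IsProbabilityMeasure P]
    (T : ℝ) (hT : 0 < T) (ν : Measure U) [SigmaFinite ν]
    (μST : Measure (ℝ × U))
    (hμ : μST = ((volume : Measure ℝ).restrict (Set.Icc 0 T)).prod ν)
    (N : Ω → Measure (ℝ × U)) (hMS : MeckeSub P μST N) (hN : Measurable N)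
    (Φ : Ω × (ℝ × U) → H) (hpred : StronglyMeasurable[predProd N] Φ)
    (f : Measure (ℝ × U) → (ℝ × U) → H)
    (hf : StronglyMeasurable (Function.uncurry f))
    (hrep : ∀ᵐ pr ∂(P.prod μST), Φ pr = f (N pr.1) pr.2)
    (hint : Integrable Φ (P.prod μST)) :
    ∀ᵐ ω ∂P, ∫ x, f (rmPt (N ω) x) x ∂(N ω) = ∫ x, Φ (ω, x) ∂(N ω) :=
  predictable_pathwise_eq_ito_N_general P T ν μST hμ N hMS hN Φ hpred f hf hrep
end
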